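/- arXiv:1208.4938 — 7 statements merged into one kernel-verified Lean document; each statement's English description precedes it below -/
import Mathlib

section
/- Let (Ω, F, P) be a probability space equipped with a filtration (F_n)_{n∈ℕ}, and let k > 0, a ≥ 0 and C ≥ 0 be real constants. Suppose (A_n)_{n≥1} and (B_n)_{n≥1} are sequences of nonnegative real-valued random variables adapted to (F_n), (ξ_n)_{n≥1} is a sequence of real-valued random variables such that ξ_n is F_{n+1}-measurable, |ξ_n| ≤ C almost surely and E[ξ_n | F_n] = 0 almost surely for every n, and (R_n)_{n≥1} is a sequence of real-valued random variables with ∑_{n≥1} |R_n| < ∞ almost surely. If for every n ≥ 1 one has B_{n+1} − B_n = (1/n)(A_n − k·B_n + ξ_n) + R_{n+1} almost surely, and A_n → a almost surely as n → ∞, then B_n → a/k almost surely as n → ∞. -/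
open MeasureTheory Filter Topology
open scoped ENNReal NNReal

/-- Harmonic-type sums over `Ico N n` tend to infinity. -/
lemma harm_tendsto (N : ℕ) :
    Tendsto (fun n => ∑ j ∈ Finset.Ico N n, (1 / (j : ℝ))) atTop atTop := by
  have hdiv : Tendsto (fun n => ∑ j ∈ Finset.range n, (1 / (j : ℝ))) atTop atTop := by
    rw [← not_summable_iff_tendsto_nat_atTop_of_nonneg]
    · exact_mod_cast Real.not_summable_one_div_natCast
    · intro i; positivity
  have : ∀ n, N ≤ n → ∑ j ∈ Finset.Ico N n, (1 / (j : ℝ))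
      = (∑ j ∈ Finset.range n, (1 / (j : ℝ))) - ∑ j ∈ Finset.range N, (1 / (j : ℝ)) := by
    intro n hn
    rw [Finset.range_eq_Ico, ← Finset.sum_Ico_consecutive (fun j => (1 / (j : ℝ))) (Nat.zero_le N) hn]
    rw [Finset.range_eq_Ico]
    ring
  refine Tendsto.congr' ?_ (hdiv.atTop_add tendsto_const_nhds : Tendsto (fun n => (∑ j ∈ Finset.range n, (1 / (j : ℝ))) + (- ∑ j ∈ Finset.range N, (1 / (j : ℝ)))) atTop atTop)
  filter_upwards [eventually_ge_atTop N] with n hn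
  rw [this n hn]; ring

/-- If nonneg `w` satisfies `w (n+1) ≤ (1 - k/n) w n` eventually, then `w → 0`. -/
lemma det_w_to_zero (k : ℝ) (hk : 0 < k) (N : ℕ) (w : ℕ → ℝ) (hw : ∀ n, 0 ≤ w n)
    (hrec : ∀ n, N ≤ n → w (n + 1) ≤ (1 - k / n) * w n) :
    Tendsto w atTop (𝓝 0) := by
  have key : ∀ n, N ≤ n → w n ≤ w N * Real.exp (-(k * ∑ j ∈ Finset.Ico N n, (1 / (j : ℝ)))) := by
    intro n hn
    induction n with
    | zero =>
        have : N = 0 := Nat.le_zero.mp hn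
        subst this; simp
    | succ m ih =>
        rcases Nat.lt_or_ge N (m + 1) with h | h
        · have hm : N ≤ m := Nat.lt_succ_iff.mp h
          have h1 : w (m + 1) ≤ (1 - k / m) * w m := hrec m hm
          have h2 : (1 - k / m) * w m ≤ Real.exp (-(k / m)) * w m := by
            have := Real.add_one_le_exp (-(k / (m : ℝ)))
            nlinarith [hw m]
          have h3 := ih hm
          have h4 : Real.exp (-(k / m)) * w m
              ≤ Real.exp (-(k / m)) * (w N * Real.exp (-(k * ∑ j ∈ Finset.Ico N m, (1 / (j : ℝ))))) := by
            have := Real.exp_pos (-(k / (m : ℝ)))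
            nlinarith
          have h5 : ∑ j ∈ Finset.Ico N (m + 1), (1 / (j : ℝ))
              = (∑ j ∈ Finset.Ico N m, (1 / (j : ℝ))) + 1 / m := Finset.sum_Ico_succ_top hm _
          calc w (m + 1) ≤ (1 - k / m) * w m := h1
            _ ≤ Real.exp (-(k / m)) * w m := h2
            _ ≤ Real.exp (-(k / m)) * (w N * Real.exp (-(k * ∑ j ∈ Finset.Ico N m, (1 / (j : ℝ))))) := h4
            _ = w N * Real.exp (-(k * ∑ j ∈ Finset.Ico N (m + 1), (1 / (j : ℝ)))) := by
                rw [h5, mul_add, mul_one_div, neg_add, Real.exp_add]; ring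
        · -- N = m + 1
          have : N = m + 1 := le_antisymm hn h
          subst this; simp
  have hexp : Tendsto (fun n => w N * Real.exp (-(k * ∑ j ∈ Finset.Ico N n, (1 / (j : ℝ))))) atTop (𝓝 0) := by
    rw [show (0 : ℝ) = w N * 0 by ring]
    refine Tendsto.const_mul _ (Real.tendsto_exp_atBot.comp ?_)
    refine tendsto_neg_atBot_iff.mpr ?_
    exact Tendsto.const_mul_atTop hk (harm_tendsto N)
  refine tendsto_of_tendsto_of_tendsto_of_le_of_le' tendsto_const_nhds hexp ?_ ?_
  · exact Eventually.of_forall hw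
  · filter_upwards [eventually_ge_atTop N] with n hn using key n hn

lemma det_u_to_zero (k : ℝ) (hk : 0 < k) (u δ : ℕ → ℝ)
    (hδ : Tendsto δ atTop (𝓝 0))
    (hrec : ∀ n, 1 ≤ n → u (n + 1) = (1 - k / n) * u n + δ n / n) :
    Tendsto u atTop (𝓝 0) := by
  rw [NormedAddCommGroup.tendsto_nhds_zero]
  intro ε hε
  set η : ℝ := k * ε / 2 with hηdef
  have hη : 0 < η := by positivity
  obtain ⟨N₀, hN₀⟩ := (Metric.tendsto_atTop.mp hδ) η hη
  set N : ℕ := max N₀ (max 1 (⌈k⌉₊ + 1)) with hNdef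
  have hN1 : 1 ≤ N := le_trans (le_max_left 1 _) (le_max_right N₀ _)
  have hNk : ∀ n : ℕ, N ≤ n → k / (n : ℝ) ≤ 1 := by
    intro n hn
    have hkn : k ≤ (n : ℝ) := by
      have h1 : (⌈k⌉₊ : ℝ) ≤ n := by
        exact_mod_cast le_trans (le_trans (Nat.le_succ _) (le_trans (le_max_right 1 _) (le_max_right N₀ _))) hn
      exact le_trans (Nat.le_ceil k) h1
    have hnpos : (0 : ℝ) < n := lt_of_lt_of_le hk hkn
    rw [div_le_one hnpos]; exact hkn
  set w : ℕ → ℝ := fun n => max (|u n| - η / k) 0 with hwdef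
  have hw0 : ∀ n, 0 ≤ w n := fun n => le_max_right _ _
  have hwrec : ∀ n, N ≤ n → w (n + 1) ≤ (1 - k / n) * w n := by
    intro n hn
    have hn1 : 1 ≤ n := le_trans hN1 hn
    have hnpos : (0 : ℝ) < n := by exact_mod_cast hn1
    have hfac : 0 ≤ 1 - k / n := by linarith [hNk n hn]
    have hδn : |δ n| ≤ η := by
      have := hN₀ n (le_trans (le_max_left N₀ _) hn)
      rw [Real.dist_eq, sub_zero] at this; exact le_of_lt this
    have h1 : |u (n + 1)| ≤ (1 - k / n) * |u n| + η / n := by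
      rw [hrec n hn1]
      calc |(1 - k / n) * u n + δ n / n| ≤ |(1 - k / n) * u n| + |δ n / n| := abs_add_le _ _
        _ = (1 - k / n) * |u n| + |δ n| / n := by
            rw [abs_mul, abs_of_nonneg hfac, abs_div, abs_of_pos hnpos]
        _ ≤ (1 - k / n) * |u n| + η / n := by
            gcongr
    have h2 : |u (n + 1)| - η / k ≤ (1 - k / n) * (|u n| - η / k) := by
      have : (1 - k / n) * (η / k) = η / k - η / n := by
        field_simp
      nlinarith
    have h3 : (1 - k / n) * (|u n| - η / k) ≤ (1 - k / n) * w n := by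
      have : |u n| - η / k ≤ w n := le_max_left _ _
      nlinarith
    have h4 : (0 : ℝ) ≤ (1 - k / n) * w n := mul_nonneg hfac (hw0 n)
    exact max_le (le_trans h2 h3) h4
  have hwlim : Tendsto w atTop (𝓝 0) := det_w_to_zero k hk N w hw0 hwrec
  have hηk : η / k = ε / 2 := by field_simp [hηdef]; ring
  have := (Metric.tendsto_atTop.mp hwlim) (ε / 2) (by positivity)
  obtain ⟨M, hM⟩ := this
  rw [eventually_atTop]
  refine ⟨M, fun n hn => ?_⟩
  have h := hM n hn
  rw [Real.dist_eq, sub_zero, abs_of_nonneg (hw0 n)] at h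
  have : |u n| - η / k ≤ w n := le_max_left _ _
  have : |u n| < ε := by rw [hηk] at this; linarith
  simpa [Real.norm_eq_abs] using this

lemma det_main (k a : ℝ) (hk : 0 < k) (b α e : ℕ → ℝ)
    (hα : Tendsto α atTop (𝓝 a))
    (he : ∃ S, Tendsto (fun N => ∑ n ∈ Finset.range N, e n) atTop (𝓝 S))
    (hrec : ∀ n, 1 ≤ n → b (n + 1) = b n + (1 / (n : ℝ)) * (α n - k * b n) + e n) :
    Tendsto b atTop (𝓝 (a / k)) := by
  obtain ⟨S, hS⟩ := he
  set t : ℕ → ℝ := fun n => S - ∑ i ∈ Finset.range n, e i with htdef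
  have ht0 : Tendsto t atTop (𝓝 0) := by
    have := hS.const_sub S
    simpa using this
  have hte : ∀ n, t (n + 1) = t n - e n := by
    intro n; simp [htdef, Finset.sum_range_succ]; ring
  set u : ℕ → ℝ := fun n => b n - a / k + t n with hudef
  set δ : ℕ → ℝ := fun n => α n - a + k * t n with hδdef
  have hδ0 : Tendsto δ atTop (𝓝 0) := by
    have h1 : Tendsto (fun n => α n - a) atTop (𝓝 0) := by
      simpa using hα.sub_const a
    have h2 : Tendsto (fun n => k * t n) atTop (𝓝 0) := by
      simpa using ht0.const_mul k
    simpa using h1.add h2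
  have hurec : ∀ n, 1 ≤ n → u (n + 1) = (1 - k / n) * u n + δ n / n := by
    intro n hn
    have hnpos : (0 : ℝ) < n := by exact_mod_cast hn
    have hne : (n : ℝ) ≠ 0 := ne_of_gt hnpos
    simp only [hudef, hδdef, hrec n hn, hte n]
    field_simp
    ring
  have huto : Tendsto u atTop (𝓝 0) := det_u_to_zero k hk u δ hδ0 hurec
  have : Tendsto (fun n => u n - t n + a / k) atTop (𝓝 (0 - 0 + a / k)) :=
    (huto.sub ht0).add_const (a / k)
  simp only [sub_zero, zero_sub, zero_add] at this
  refine this.congr fun n => by simp only [hudef]; ring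



lemma integral_sq_sum_le {Ω : Type*} {m : MeasurableSpace Ω} (P : Measure Ω)
    (f : ℕ → Ω → ℝ) (s : Finset ℕ) (c : ℕ → ℝ)
    (hint : ∀ i ∈ s, ∀ j ∈ s, Integrable (fun ω => f i ω * f j ω) P)
    (horth : ∀ i ∈ s, ∀ j ∈ s, i ≠ j → ∫ ω, f i ω * f j ω ∂P = 0)
    (hdiag : ∀ i ∈ s, ∫ ω, f i ω * f i ω ∂P ≤ c i) :
    ∫ ω, (∑ i ∈ s, f i ω) ^ 2 ∂P ≤ ∑ i ∈ s, c i := by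
  have hexp : (fun ω => (∑ i ∈ s, f i ω) ^ 2)
      = fun ω => ∑ i ∈ s, ∑ j ∈ s, f i ω * f j ω := by
    funext ω; rw [sq, Finset.sum_mul_sum]
  rw [hexp, integral_finset_sum s (fun i hi => integrable_finset_sum s (fun j hj => hint i hi j hj))]
  have hinner : ∀ i ∈ s, ∫ ω, ∑ j ∈ s, f i ω * f j ω ∂P = ∑ j ∈ s, ∫ ω, f i ω * f j ω ∂P :=
    fun i hi => integral_finset_sum s (fun j hj => hint i hi j hj)
  calc ∑ i ∈ s, ∫ ω, ∑ j ∈ s, f i ω * f j ω ∂P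
      = ∑ i ∈ s, ∑ j ∈ s, ∫ ω, f i ω * f j ω ∂P := Finset.sum_congr rfl hinner
    _ = ∑ i ∈ s, ∫ ω, f i ω * f i ω ∂P := by
        refine Finset.sum_congr rfl fun i hi => ?_
        exact Finset.sum_eq_single_of_mem i hi fun j hj hji => horth i hi j hj (Ne.symm hji)
    _ ≤ ∑ i ∈ s, c i := Finset.sum_le_sum hdiag



/-- Stochastic approximation convergence lemma (Lemma 4 of the paper). -/
theorem stmt0
    {Ω : Type*} {m0 : MeasurableSpace Ω} {P : Measure Ω} [IsProbabilityMeasure P]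
    (F : MeasureTheory.Filtration ℕ m0)
    (k a C : ℝ) (hk : 0 < k) (ha : 0 ≤ a) (hC : 0 ≤ C)
    (A B ξ R : ℕ → Ω → ℝ)
    (hA_nonneg : ∀ n, 1 ≤ n → ∀ ω, 0 ≤ A n ω)
    (hB_nonneg : ∀ n, 1 ≤ n → ∀ ω, 0 ≤ B n ω)
    (hA_adapted : Adapted F A) (hB_adapted : Adapted F B)
    (hξ_meas : ∀ n, 1 ≤ n → Measurable[F (n + 1)] (ξ n))
    (hξ_bdd : ∀ n, 1 ≤ n → ∀ᵐ ω ∂P, |ξ n ω| ≤ C)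
    (hξ_cond : ∀ n, 1 ≤ n → P[ξ n|F n] =ᵐ[P] 0)
    (hR_summable : ∀ᵐ ω ∂P, Summable fun n : ℕ => |R (n + 1) ω|)
    (hrec : ∀ n, 1 ≤ n → ∀ᵐ ω ∂P,
      B (n + 1) ω - B n ω = (1 / (n : ℝ)) * (A n ω - k * B n ω + ξ n ω) + R (n + 1) ω)
    (hA_lim : ∀ᵐ ω ∂P, Tendsto (fun n => A n ω) atTop (𝓝 a)) :
    ∀ᵐ ω ∂P, Tendsto (fun n => B n ω) atTop (𝓝 (a / k)) := by
  have hξm : ∀ n, 1 ≤ n → Measurable (ξ n) :=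
    fun n hn => (hξ_meas n hn).mono (F.le (n + 1)) le_rfl
  have hξint : ∀ n, 1 ≤ n → Integrable (ξ n) P := by
    intro n hn
    refine (integrable_const C).mono' (hξm n hn).aestronglyMeasurable ?_
    filter_upwards [hξ_bdd n hn] with ω h using by simpa [Real.norm_eq_abs] using h
  set g : ℕ → Ω → ℝ := fun n ω => (1 / (n : ℝ)) * ξ n ω with hg
  have hg0 : g 0 = fun _ => 0 := by funext ω; simp [hg]
  have hgint : ∀ n, Integrable (g n) P := by
    intro n
    rcases Nat.eq_zero_or_pos n with h | h
    · rw [h, hg0]; exact integrable_const 0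
    · exact (hξint n h).const_mul _
  set M : ℕ → Ω → ℝ := fun N ω => ∑ n ∈ Finset.range N, g n ω with hM
  have hMadp : StronglyAdapted F M := by
    intro N
    show StronglyMeasurable[F N] fun ω => ∑ n ∈ Finset.range N, g n ω
    refine Finset.stronglyMeasurable_fun_sum _ fun n hn => ?_
    rw [Finset.mem_range] at hn
    rcases Nat.eq_zero_or_pos n with h | h
    · rw [h, hg0]; exact stronglyMeasurable_const
    · have hmle : F (n + 1) ≤ F N := F.mono hn
      exact (((hξ_meas n h).mono hmle le_rfl).const_mul _).stronglyMeasurable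
  have hMint : ∀ N, Integrable (M N) P := fun N =>
    integrable_finset_sum _ fun n _ => hgint n
  have hMart : Martingale M F P := by
    refine martingale_nat hMadp hMint fun i => ?_
    have hMsucc : M (i + 1) = M i + g i := by
      funext ω; exact Finset.sum_range_succ _ _
    have hgcond : P[g i|F i] =ᵐ[P] 0 := by
      rcases Nat.eq_zero_or_pos i with h | h
      · rw [h, hg0]
        rw [show (fun _ : Ω => (0 : ℝ)) = (0 : Ω → ℝ) from rfl, condExp_zero]
      · have : g i = (1 / (i : ℝ)) • ξ i := rfl
        rw [this]
        refine (condExp_smul _ _ _).trans ?_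
        filter_upwards [hξ_cond i h] with ω hω
        simp [hω]
    have h1 : P[M (i + 1)|F i] =ᵐ[P] P[M i|F i] + P[g i|F i] := by
      rw [hMsucc]; exact condExp_add (hMint i) (hgint i) _
    have h2 : P[M i|F i] = M i :=
      condExp_of_stronglyMeasurable (F.le i) (hMadp i) (hMint i)
    refine EventuallyEq.symm (h1.trans ?_)
    rw [h2]
    filter_upwards [hgcond] with ω hω
    simp [hω]
  -- product integrability and orthogonality
  have hprodint : ∀ i j, 1 ≤ i → 1 ≤ j → Integrable (fun ω => ξ i ω * ξ j ω) P := by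
    intro i j hi hj
    refine (integrable_const (C * C)).mono' ((hξm i hi).mul (hξm j hj)).aestronglyMeasurable ?_
    filter_upwards [hξ_bdd i hi, hξ_bdd j hj] with ω h1 h2
    rw [Real.norm_eq_abs, abs_mul]
    exact mul_le_mul h1 h2 (abs_nonneg _) hC
  have horthξ : ∀ i j, 1 ≤ i → 1 ≤ j → i ≠ j → ∫ ω, ξ i ω * ξ j ω ∂P = 0 := by
    have base : ∀ i j, 1 ≤ i → i < j → ∫ ω, ξ i ω * ξ j ω ∂P = 0 := by
      intro i j hi hij
      have hj : 1 ≤ j := by omega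
      have hsm : StronglyMeasurable[F j] (ξ i) :=
        ((hξ_meas i hi).mono (F.mono (by omega : i + 1 ≤ j)) le_rfl).stronglyMeasurable
      have hbd : ∀ᵐ ω ∂P, ‖ξ i ω‖ ≤ C := by
        filter_upwards [hξ_bdd i hi] with ω h using by simpa [Real.norm_eq_abs] using h
      have h1 : P[ξ i * ξ j|F j] =ᵐ[P] ξ i * P[ξ j|F j] :=
        condExp_stronglyMeasurable_mul_of_bound (F.le j) hsm (hξint j hj) C hbd
      have hzero : ξ i * P[ξ j|F j] =ᵐ[P] 0 := by
        filter_upwards [hξ_cond j hj] with ω hω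
        simp only [Pi.mul_apply, Pi.zero_apply] at *
        rw [hω, mul_zero]
      calc ∫ ω, ξ i ω * ξ j ω ∂P = ∫ ω, (P[ξ i * ξ j|F j]) ω ∂P :=
            (integral_condExp (F.le j)).symm
        _ = ∫ ω, (0 : Ω → ℝ) ω ∂P := integral_congr_ae (h1.trans hzero)
        _ = 0 := by simp
    intro i j hi hj hne
    rcases lt_or_gt_of_ne hne with h | h
    · exact base i j hi h
    · rw [show (fun ω => ξ i ω * ξ j ω) = fun ω => ξ j ω * ξ i ω from
        funext fun ω => mul_comm _ _]
      exact base j i hj h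
  set T : ℝ := ∑' n : ℕ, (1 / (n : ℝ)) ^ 2 with hT
  have hTsum : Summable fun n : ℕ => (1 / (n : ℝ)) ^ 2 := by
    have := Real.summable_one_div_nat_pow.mpr (le_refl 2)
    simpa [div_pow] using this
  have heqg : ∀ i j, (fun ω => g i ω * g j ω)
      = fun ω => ((1 / (i : ℝ)) * (1 / (j : ℝ))) * (ξ i ω * ξ j ω) := by
    intro i j; funext ω; simp only [hg]; ring
  have hgzero : ∀ j, (fun ω => g 0 ω * g j ω) = fun _ => (0 : ℝ) := by
    intro j; funext ω; simp [hg]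
  have hgzero' : ∀ i, (fun ω => g i ω * g 0 ω) = fun _ => (0 : ℝ) := by
    intro i; funext ω; simp [hg]
  have hMM : ∀ N, ∫ ω, (M N ω) ^ 2 ∂P ≤ C ^ 2 * T := by
    intro N
    have hint : ∀ i ∈ Finset.range N, ∀ j ∈ Finset.range N,
        Integrable (fun ω => g i ω * g j ω) P := by
      intro i _ j _
      rcases Nat.eq_zero_or_pos i with hi | hi
      · rw [hi, hgzero]; exact integrable_const 0
      rcases Nat.eq_zero_or_pos j with hj | hj
      · rw [hj, hgzero']; exact integrable_const 0
      rw [heqg]; exact (hprodint i j hi hj).const_mul _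
    have horth : ∀ i ∈ Finset.range N, ∀ j ∈ Finset.range N, i ≠ j →
        ∫ ω, g i ω * g j ω ∂P = 0 := by
      intro i _ j _ hne
      rcases Nat.eq_zero_or_pos i with hi | hi
      · rw [hi, hgzero]; simp
      rcases Nat.eq_zero_or_pos j with hj | hj
      · rw [hj, hgzero']; simp
      rw [heqg, integral_const_mul, horthξ i j hi hj hne, mul_zero]
    have hdiag : ∀ i ∈ Finset.range N,
        ∫ ω, g i ω * g i ω ∂P ≤ C ^ 2 * (1 / (i : ℝ)) ^ 2 := by
      intro i _
      rcases Nat.eq_zero_or_pos i with hi | hi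
      · rw [hi, hgzero]; simp
      have hii : ∫ ω, ξ i ω * ξ i ω ∂P ≤ C ^ 2 := by
        have hb : ∀ᵐ ω ∂P, ξ i ω * ξ i ω ≤ C ^ 2 := by
          filter_upwards [hξ_bdd i hi] with ω h
          nlinarith [le_abs_self (ξ i ω), neg_abs_le (ξ i ω), abs_nonneg (ξ i ω)]
        calc ∫ ω, ξ i ω * ξ i ω ∂P ≤ ∫ _ω, C ^ 2 ∂P :=
              integral_mono_ae (hprodint i i hi hi) (integrable_const _) hb
          _ = C ^ 2 := by simp
      rw [heqg, integral_const_mul]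
      calc (1 / (i : ℝ)) * (1 / (i : ℝ)) * ∫ ω, ξ i ω * ξ i ω ∂P
          ≤ (1 / (i : ℝ)) * (1 / (i : ℝ)) * C ^ 2 := by
            refine mul_le_mul_of_nonneg_left hii (by positivity)
        _ = C ^ 2 * (1 / (i : ℝ)) ^ 2 := by ring
    calc ∫ ω, (M N ω) ^ 2 ∂P
        = ∫ ω, (∑ n ∈ Finset.range N, g n ω) ^ 2 ∂P := rfl
      _ ≤ ∑ n ∈ Finset.range N, C ^ 2 * (1 / (n : ℝ)) ^ 2 :=
          integral_sq_sum_le P g (Finset.range N) _ hint horth hdiag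
      _ = C ^ 2 * ∑ n ∈ Finset.range N, (1 / (n : ℝ)) ^ 2 := by rw [Finset.mul_sum]
      _ ≤ C ^ 2 * T := by
          refine mul_le_mul_of_nonneg_left ?_ (sq_nonneg C)
          exact Summable.sum_le_tsum _ (fun n _ => sq_nonneg _) hTsum
  -- L¹ bound and martingale convergence
  have hgb : ∀ n, ∀ᵐ ω ∂P, |g n ω| ≤ C := by
    intro n
    rcases Nat.eq_zero_or_pos n with hn | hn
    · refine Eventually.of_forall fun ω => ?_
      rw [hn]; simpa [hg] using hC
    · filter_upwards [hξ_bdd n hn] with ω h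
      have h1 : |(1 : ℝ) / n| ≤ 1 := by
        rw [abs_of_nonneg (by positivity)]
        have : (1 : ℝ) ≤ n := by exact_mod_cast hn
        rw [div_le_one (by linarith)]; linarith
      calc |g n ω| = |(1 : ℝ) / n| * |ξ n ω| := by rw [hg]; exact abs_mul _ _
        _ ≤ 1 * C := mul_le_mul h1 h (abs_nonneg _) one_pos.le
        _ = C := one_mul C
  have hbdd : ∀ N, eLpNorm (M N) 1 P ≤ ((Real.toNNReal ((1 + C ^ 2 * T) / 2)) : ℝ≥0∞) := by
    intro N
    have hMsm : StronglyMeasurable (M N) := (hMadp N).mono (F.le N)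
    have hMb : ∀ᵐ ω ∂P, |M N ω| ≤ N * C := by
      filter_upwards [ae_all_iff.mpr hgb] with ω hω
      calc |M N ω| ≤ ∑ n ∈ Finset.range N, |g n ω| := by
            rw [hM]; exact Finset.abs_sum_le_sum_abs _ _
        _ ≤ ∑ _n ∈ Finset.range N, C := Finset.sum_le_sum fun n _ => hω n
        _ = N * C := by simp [Finset.sum_const, nsmul_eq_mul]
    have hMsq : Integrable (fun ω => M N ω ^ 2) P := by
      refine (integrable_const (((N : ℝ) * C) ^ 2)).mono'
        ((hMsm.measurable.pow_const 2).stronglyMeasurable.aestronglyMeasurable) ?_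
      filter_upwards [hMb] with ω h
      rw [Real.norm_eq_abs, abs_pow, sq_abs]
      nlinarith [abs_nonneg (M N ω), mul_self_le_mul_self (abs_nonneg (M N ω)) h, sq_abs (M N ω)]
    have key : ∫ ω, |M N ω| ∂P ≤ (1 + C ^ 2 * T) / 2 := by
      have hple : ∀ ω, |M N ω| ≤ (1 + M N ω ^ 2) / 2 := fun ω => by
        nlinarith [sq_abs (M N ω), sq_nonneg (|M N ω| - 1)]
      calc ∫ ω, |M N ω| ∂P ≤ ∫ ω, (1 + M N ω ^ 2) / 2 ∂P :=
            integral_mono (hMint N).abs (((integrable_const 1).add hMsq).div_const 2) hple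
        _ = (1 + ∫ ω, M N ω ^ 2 ∂P) / 2 := by
            rw [integral_div, integral_add (integrable_const 1) hMsq]; simp
        _ ≤ (1 + C ^ 2 * T) / 2 := by linarith [hMM N]
    calc eLpNorm (M N) 1 P = ENNReal.ofReal (∫ ω, ‖M N ω‖ ∂P) := by
          rw [eLpNorm_one_eq_lintegral_enorm, ← ofReal_integral_norm_eq_lintegral_enorm (hMint N)]
      _ ≤ ENNReal.ofReal ((1 + C ^ 2 * T) / 2) :=
          ENNReal.ofReal_le_ofReal (by simpa [Real.norm_eq_abs] using key)
      _ = ((Real.toNNReal ((1 + C ^ 2 * T) / 2)) : ℝ≥0∞) := rfl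
  have hconv := hMart.submartingale.exists_ae_tendsto_of_bdd hbdd
  have hrec_ae : ∀ᵐ ω ∂P, ∀ n, 1 ≤ n →
      B (n + 1) ω - B n ω = (1 / (n : ℝ)) * (A n ω - k * B n ω + ξ n ω) + R (n + 1) ω := by
    rw [ae_all_iff]
    intro n
    rcases Nat.eq_zero_or_pos n with hn | hn
    · exact Eventually.of_forall fun ω h => absurd h (by omega)
    · filter_upwards [hrec n hn] with ω hω _
      exact hω
  filter_upwards [hconv, hR_summable, hrec_ae, hA_lim] with ω hc hRs hre hAl
  obtain ⟨S₁, hS₁⟩ := hc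
  have hRs' : Summable fun n : ℕ => R (n + 1) ω := hRs.of_abs
  have hS₂ := hRs'.hasSum.tendsto_sum_nat
  refine det_main k a hk (fun n => B n ω) (fun n => A n ω)
    (fun n => g n ω + R (n + 1) ω) hAl ?_ ?_
  · refine ⟨S₁ + ∑' n : ℕ, R (n + 1) ω, ?_⟩
    refine (hS₁.add hS₂).congr fun N => ?_
    simp [hM, Finset.sum_add_distrib]
  · intro n hn
    have hω := hre n hn
    have hsplit : (1 / (n : ℝ)) * (A n ω - k * B n ω + ξ n ω)
        = (1 / (n : ℝ)) * (A n ω - k * B n ω) + g n ω := by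
      simp only [hg]; ring
    rw [hsplit] at hω
    linarith
end

section
/- Let k > 0 and a ≥ 0 be real constants. Let (b_n)_{n≥1} be a sequence of nonnegative reals, (a_n)_{n≥1} a sequence of reals with a_n → a as n → ∞, and (r_n)_{n≥1} a sequence of reals with ∑_{n≥1} |r_n| < ∞. If b_{n+1} − b_n = (1/n)(a_n − k·b_n) + r_{n+1} for every n ≥ 1, then b_n → a/k as n → ∞. -/
open Filter Topology Finset


lemma prodTendsto (k : ℝ) (hk : 0 < k) (N : ℕ) (hN : k < N) :
    Tendsto (fun n => ∏ j ∈ Finset.Ico N n, (1 - k / (j:ℝ))) atTop (𝓝 0) := by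
  have hfac : ∀ j : ℕ, j ∈ Finset.Ico N j.succ → True := fun _ _ => trivial
  -- basic facts
  have hNpos : 0 < N := by
    by_contra h
    push_neg at h
    interval_cases N
    · simp at hN; linarith
  have hfnn : ∀ n, ∀ j ∈ Finset.Ico N n, (0:ℝ) ≤ 1 - k / (j:ℝ) := by
    intro n j hj
    have hj' : N ≤ j := (Finset.mem_Ico.mp hj).1
    have hjpos : (0:ℝ) < j := by
      have : 0 < j := lt_of_lt_of_le hNpos hj'
      exact_mod_cast this
    have : k / (j:ℝ) ≤ 1 := by
      rw [div_le_one hjpos]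
      calc k ≤ (N:ℝ) := hN.le
        _ ≤ (j:ℝ) := by exact_mod_cast hj'
    linarith
  -- harmonic sums
  set full : ℕ → ℝ := fun n => ∑ j ∈ Finset.range n, 1 / (j:ℝ) with hfull
  have hfull_top : Tendsto full atTop atTop := by
    have hnn : ∀ j : ℕ, (0:ℝ) ≤ 1 / (j:ℝ) := by
      intro j; positivity
    have := (not_summable_iff_tendsto_nat_atTop_of_nonneg hnn).mp
      Real.not_summable_one_div_natCast
    exact this
  set S : ℕ → ℝ := fun n => ∑ j ∈ Finset.Ico N n, 1 / (j:ℝ) with hS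
  have hStop : Tendsto S atTop atTop := by
    have h1 : Tendsto (fun n => full n - full N) atTop atTop :=
      tendsto_atTop_add_const_right _ (-full N) hfull_top |>.congr (by intro n; ring)
    refine h1.congr' ?_
    filter_upwards [eventually_ge_atTop N] with n hn
    exact (Finset.sum_Ico_eq_sub _ hn).symm
  -- exponential bound
  have hbound : ∀ n, (∏ j ∈ Finset.Ico N n, (1 - k / (j:ℝ))) ≤ Real.exp (-(k * S n)) := by
    intro n
    have h1 : (∏ j ∈ Finset.Ico N n, (1 - k / (j:ℝ)))
        ≤ ∏ j ∈ Finset.Ico N n, Real.exp (-(k / (j:ℝ))) := by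
      apply Finset.prod_le_prod (hfnn n)
      intro j hj
      have := Real.add_one_le_exp (-(k / (j:ℝ)))
      linarith
    calc (∏ j ∈ Finset.Ico N n, (1 - k / (j:ℝ)))
        ≤ ∏ j ∈ Finset.Ico N n, Real.exp (-(k / (j:ℝ))) := h1
      _ = Real.exp (∑ j ∈ Finset.Ico N n, -(k / (j:ℝ))) := (Real.exp_sum _ _).symm
      _ = Real.exp (-(k * S n)) := by
          congr 1
          rw [hS]
          push_cast
          rw [Finset.mul_sum, ← Finset.sum_neg_distrib]
          · apply Finset.sum_congr rfl; intro j _; field_simp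
  have hexp : Tendsto (fun n => Real.exp (-(k * S n))) atTop (𝓝 0) := by
    apply Real.tendsto_exp_atBot.comp
    exact tendsto_neg_atTop_atBot.comp (hStop.const_mul_atTop hk)
  apply squeeze_zero (fun n => Finset.prod_nonneg (hfnn n)) hbound hexp

lemma eTendsto (k : ℝ) (hk : 0 < k) (e t : ℕ → ℝ)
    (ht : Tendsto t atTop (𝓝 0))
    (hrec : ∀ n, 1 ≤ n → e (n + 1) = (1 - k / (n:ℝ)) * e n + t n / (n:ℝ)) :
    Tendsto e atTop (𝓝 0) := by
  rw [NormedAddCommGroup.tendsto_nhds_zero]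
  intro ε hε
  set δ : ℝ := k * ε / 3 with hδ
  have hδpos : 0 < δ := by positivity
  -- choose N
  obtain ⟨N₀, hN₀⟩ := (Metric.tendsto_atTop.mp ht) δ hδpos
  set N : ℕ := max N₀ (⌈k⌉₊ + 1) with hNdef
  have hN1 : 1 ≤ N := le_trans (Nat.le_add_left 1 _) (le_max_right _ _)
  have hNk : k < N := by
    calc k ≤ (⌈k⌉₊ : ℝ) := Nat.le_ceil k
      _ < (⌈k⌉₊ + 1 : ℕ) := by push_cast; linarith
      _ ≤ (N : ℝ) := by exact_mod_cast le_max_right _ _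
  have ht' : ∀ n, N ≤ n → |t n| ≤ δ := by
    intro n hn
    have := hN₀ n (le_trans (le_max_left _ _) hn)
    rw [Real.dist_eq, sub_zero] at this
    exact this.le
  set g : ℕ → ℝ := fun n => max (|e n| - δ / k) 0 with hg
  have hgnn : ∀ n, 0 ≤ g n := fun n => le_max_right _ _
  have hfacnn : ∀ n : ℕ, N ≤ n → (0:ℝ) ≤ 1 - k / (n:ℝ) := by
    intro n hn
    have hnpos : (0:ℝ) < n := by
      have : 0 < n := lt_of_lt_of_le (lt_of_le_of_lt (Nat.zero_le _) (Nat.lt_of_lt_of_le (Nat.lt_succ_self 0) hN1)) hn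
      exact_mod_cast this
    have : k / (n:ℝ) ≤ 1 := by
      rw [div_le_one hnpos]
      calc k ≤ (N:ℝ) := hNk.le
        _ ≤ (n:ℝ) := by exact_mod_cast hn
    linarith
  have key : ∀ n, N ≤ n → g (n + 1) ≤ (1 - k / (n:ℝ)) * g n := by
    intro n hn
    have hn1 : 1 ≤ n := le_trans hN1 hn
    have hnpos : (0:ℝ) < n := by exact_mod_cast lt_of_lt_of_le Nat.one_pos hn1
    have hfac := hfacnn n hn
    have habs : |e (n + 1)| ≤ (1 - k / (n:ℝ)) * |e n| + δ / (n:ℝ) := by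
      rw [hrec n hn1]
      calc |(1 - k / (n:ℝ)) * e n + t n / (n:ℝ)|
          ≤ |(1 - k / (n:ℝ)) * e n| + |t n / (n:ℝ)| := abs_add_le _ _
        _ = (1 - k / (n:ℝ)) * |e n| + |t n| / (n:ℝ) := by
            rw [abs_mul, abs_div, abs_of_nonneg hfac, abs_of_pos hnpos]
        _ ≤ (1 - k / (n:ℝ)) * |e n| + δ / (n:ℝ) := by
            gcongr
            exact ht' n hn
    have h2 : |e (n + 1)| - δ / k ≤ (1 - k / (n:ℝ)) * (|e n| - δ / k) := by
      have hexp : (1 - k / (n:ℝ)) * (|e n| - δ / k)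
          = (1 - k / (n:ℝ)) * |e n| + δ / (n:ℝ) - δ / k := by
        field_simp
        ring
      rw [hexp]
      linarith
    have h3 : |e n| - δ / k ≤ g n := le_max_left _ _
    apply max_le
    · calc |e (n + 1)| - δ / k ≤ (1 - k / (n:ℝ)) * (|e n| - δ / k) := h2
        _ ≤ (1 - k / (n:ℝ)) * g n := by gcongr
    · positivity
  have bound : ∀ n, N ≤ n → g n ≤ g N * ∏ j ∈ Finset.Ico N n, (1 - k / (j:ℝ)) := by
    intro n hn
    induction n, hn using Nat.le_induction with
    | base => simp
    | succ n hn ih =>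
        calc g (n + 1) ≤ (1 - k / (n:ℝ)) * g n := key n hn
          _ ≤ (1 - k / (n:ℝ)) * (g N * ∏ j ∈ Finset.Ico N n, (1 - k / (j:ℝ))) := by
              have := hfacnn n hn; gcongr
          _ = g N * ∏ j ∈ Finset.Ico N (n + 1), (1 - k / (j:ℝ)) := by
              rw [Finset.prod_Ico_succ_top hn]; ring
  have hP := (prodTendsto k hk N hNk).const_mul (g N)
  rw [mul_zero] at hP
  have hsmall : ∀ᶠ n in atTop, g N * ∏ j ∈ Finset.Ico N n, (1 - k / (j:ℝ)) < δ / k := by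
    have := hP
    rw [Metric.tendsto_atTop] at this
    obtain ⟨M, hM⟩ := this (δ / k) (by positivity)
    filter_upwards [eventually_ge_atTop M] with n hn
    have := hM n hn
    rw [Real.dist_eq, sub_zero] at this
    exact lt_of_abs_lt this
  filter_upwards [hsmall, eventually_ge_atTop N] with n h1 h2
  have : g n < δ / k := lt_of_le_of_lt (bound n h2) h1
  have h4 : |e n| - δ / k ≤ g n := le_max_left _ _
  have hδk : δ / k = ε / 3 := by
    rw [hδ]; field_simp
  rw [Real.norm_eq_abs]
  rw [hδk] at this h4
  linarith


/-- Deterministic core of the stochastic approximation lemma (Lemma 4 of the paper). -/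
theorem stmt1 (k a : ℝ) (hk : 0 < k) (ha : 0 ≤ a)
    (b aseq r : ℕ → ℝ)
    (hb : ∀ n, 1 ≤ n → 0 ≤ b n)
    (haseq : Tendsto aseq atTop (𝓝 a))
    (hr : Summable fun n : ℕ => |r (n + 1)|)
    (hrec : ∀ n, 1 ≤ n → b (n + 1) - b n = (1 / (n : ℝ)) * (aseq n - k * b n) + r (n + 1)) :
    Tendsto b atTop (𝓝 (a / k)) := by
  set f : ℕ → ℝ := fun m => r (m + 1) with hf
  have hsf : Summable f := hr.of_abs
  set T : ℕ → ℝ := fun n => ∑' m, f (m + n) with hT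
  have hT0 : Tendsto T atTop (𝓝 0) := tendsto_sum_nat_add f
  have htail : ∀ n, T n = r (n + 1) + T (n + 1) := by
    intro n
    have hs : Summable (fun m => f (m + n)) := (summable_nat_add_iff n).mpr hsf
    have := Summable.tsum_eq_zero_add hs
    rw [hT]
    simp only []
    rw [this]
    congr 1
    · show r (0 + n + 1) = r (n + 1)
      congr 1
      omega
    · apply tsum_congr
      intro m
      show f (m + 1 + n) = f (m + (n + 1))
      congr 1
      omega
  set e : ℕ → ℝ := fun n => b n + T n - a / k with he
  set t : ℕ → ℝ := fun n => aseq n + k * T n - a with ht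
  have ht0 : Tendsto t atTop (𝓝 0) := by
    have : Tendsto (fun n => aseq n + k * T n - a) atTop (𝓝 (a + k * 0 - a)) :=
      (haseq.add (hT0.const_mul k)).sub_const a
    simpa using this
  have hrec' : ∀ n, 1 ≤ n → e (n + 1) = (1 - k / (n:ℝ)) * e n + t n / (n:ℝ) := by
    intro n hn
    have hnpos : (0:ℝ) < n := by exact_mod_cast hn
    have h1 := hrec n hn
    have h2 := htail n
    have hkne : k ≠ 0 := hk.ne'
    have hnne : (n:ℝ) ≠ 0 := hnpos.ne'
    rw [he, ht]
    simp only []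
    have hb1 : b (n + 1) = b n + (1 / (n:ℝ)) * (aseq n - k * b n) + r (n + 1) := by
      linarith
    have hT1 : T (n + 1) = T n - r (n + 1) := by linarith
    rw [hb1, hT1]
    field_simp
    ring
  have he0 : Tendsto e atTop (𝓝 0) := eTendsto k hk e t ht0 hrec'
  have : Tendsto (fun n => e n - T n + a / k) atTop (𝓝 (0 - 0 + a / k)) :=
    (he0.sub hT0).add_const _
  rw [zero_sub, neg_zero, zero_add] at this
  apply this.congr
  intro n
  rw [he]
  ring
end

section
/- The restriction of V to the interior of the N-simplex Δ° = {y ∈ ℝ^N : y_i > 0 for all i, ∑_{i=1}^N y_i = 1} attains a minimum, and the minimizer is unique; that is, there exists a unique ν ∈ Δ° with V(ν) ≤ V(y) for all y ∈ Δ°. -/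
open Real Finset

/-- Midpoint concavity of `log`. -/
lemma log_mid_le {x y : ℝ} (hx : 0 < x) (hy : 0 < y) :
    (Real.log x + Real.log y) / 2 ≤ Real.log ((x + y) / 2) := by
  have h := strictConcaveOn_log_Ioi.concaveOn.2 (Set.mem_Ioi.2 hx) (Set.mem_Ioi.2 hy)
    (by norm_num : (0:ℝ) ≤ 1/2) (by norm_num : (0:ℝ) ≤ 1/2) (by norm_num)
  simp only [smul_eq_mul] at h
  calc (Real.log x + Real.log y) / 2 = 1/2 * Real.log x + 1/2 * Real.log y := by ring
    _ ≤ Real.log (1/2 * x + 1/2 * y) := h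
    _ = Real.log ((x + y) / 2) := by ring_nf

/-- Strict midpoint concavity of `log`. -/
lemma log_mid_lt {x y : ℝ} (hx : 0 < x) (hy : 0 < y) (hne : x ≠ y) :
    (Real.log x + Real.log y) / 2 < Real.log ((x + y) / 2) := by
  have h := strictConcaveOn_log_Ioi.2 (Set.mem_Ioi.2 hx) (Set.mem_Ioi.2 hy) hne
    (by norm_num : (0:ℝ) < 1/2) (by norm_num : (0:ℝ) < 1/2) (by norm_num)
  simp only [smul_eq_mul] at h
  calc (Real.log x + Real.log y) / 2 = 1/2 * Real.log x + 1/2 * Real.log y := by ring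
    _ < Real.log (1/2 * x + 1/2 * y) := h
    _ = Real.log ((x + y) / 2) := by ring_nf

/-- `V` attains a minimum on the interior of the `N`-simplex at a unique point `ν`. -/
theorem stmt5 (N : ℕ) (hN : 1 ≤ N)
    (μ : Fin N → ℝ) (hμpos : ∀ i, 0 < μ i) (hμsum : ∑ i, μ i = 1)
    (a : Fin N → Fin N → ℝ) (ha : ∀ i j, 0 < a i j) :
    ∃! ν : Fin N → ℝ, (∀ i, 0 < ν i) ∧ (∑ i, ν i = 1) ∧
      ∀ y : Fin N → ℝ, (∀ i, 0 < y i) → (∑ i, y i = 1) →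
        (1 - (1 / 2) * ∑ j, μ j * (Real.log (ν j) + Real.log (∑ k, ν k * a k j)))
          ≤ 1 - (1 / 2) * ∑ j, μ j * (Real.log (y j) + Real.log (∑ k, y k * a k j)) := by
  haveI : Nonempty (Fin N) := ⟨⟨0, hN⟩⟩
  set G : (Fin N → ℝ) → ℝ :=
    fun y => ∑ j, μ j * (Real.log (y j) + Real.log (∑ k, y k * a k j)) with hG
  -- positivity of the linear forms on the open simplex
  have hsumpos : ∀ (y : Fin N → ℝ), (∀ i, 0 < y i) → ∀ j, 0 < ∑ k, y k * a k j := by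
    intro y hy j
    exact Finset.sum_pos (fun k _ => mul_pos (hy k) (ha k j)) Finset.univ_nonempty
  -- the continuous surrogate
  set F : (Fin N → ℝ) → ℝ := fun y => ∏ j, (y j * ∑ k, y k * a k j) ^ (μ j) with hF
  have hFcont : Continuous F := by
    apply continuous_finset_prod
    intro j _
    exact (Real.continuous_rpow_const (hμpos j).le).comp
      ((continuous_apply j).mul (continuous_finset_sum _
        (fun k _ => (continuous_apply k).mul continuous_const)))
  -- F = exp G on the open simplex
  have hFG : ∀ (y : Fin N → ℝ), (∀ i, 0 < y i) → F y = Real.exp (G y) := by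
    intro y hy
    rw [hG, hF, Real.exp_sum]
    refine Finset.prod_congr rfl fun j _ => ?_
    have h1 : 0 < y j * ∑ k, y k * a k j := mul_pos (hy j) (hsumpos y hy j)
    rw [Real.rpow_def_of_pos h1, Real.log_mul (hy j).ne' (hsumpos y hy j).ne']
    ring_nf
  -- maximizer of F on the standard simplex
  obtain ⟨ν, hνmem, hνmax⟩ := (isCompact_stdSimplex ℝ (Fin N)).exists_isMaxOn
    (⟨fun _ => (N:ℝ)⁻¹, fun _ => by positivity, by
      simp [Finset.sum_const, Finset.card_univ]
      field_simp⟩) hFcont.continuousOn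
  have hmax : ∀ y ∈ stdSimplex ℝ (Fin N), F y ≤ F ν := fun y hy => hνmax hy
  -- the center point has positive value
  have hc : ∀ i, 0 < ((fun _ => (N:ℝ)⁻¹) : Fin N → ℝ) i := fun _ => by positivity
  have hFc : 0 < F (fun _ => (N:ℝ)⁻¹) := by
    rw [hF]
    exact Finset.prod_pos fun j _ =>
      Real.rpow_pos_of_pos (mul_pos (hc j) (hsumpos _ hc j)) _
  have hFν : 0 < F ν := lt_of_lt_of_le hFc (hmax _ ⟨fun _ => by positivity, by
    simp [Finset.sum_const, Finset.card_univ]; field_simp⟩)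
  -- ν is interior
  have hνpos : ∀ i, 0 < ν i := by
    intro i
    rcases (hνmem.1 i).lt_or_eq with h | h
    · exact h
    · exfalso
      have : F ν = 0 := by
        rw [hF]
        refine Finset.prod_eq_zero (Finset.mem_univ i) ?_
        rw [← h, zero_mul, Real.zero_rpow (hμpos i).ne']
      exact absurd this hFν.ne'
  -- maximality of G on the open simplex
  have hGmax : ∀ (y : Fin N → ℝ), (∀ i, 0 < y i) → (∑ i, y i = 1) → G y ≤ G ν := by
    intro y hy hysum
    have := hmax y ⟨fun i => (hy i).le, hysum⟩
    rw [hFG y hy, hFG ν hνpos] at this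
    exact (Real.exp_le_exp).1 this
  -- key: the stated inequality is equivalent to G-maximality
  have key : ∀ p : Fin N → ℝ, ((∀ i, 0 < p i) ∧ (∑ i, p i = 1) ∧
      ∀ y : Fin N → ℝ, (∀ i, 0 < y i) → (∑ i, y i = 1) →
        (1 - (1 / 2) * ∑ j, μ j * (Real.log (p j) + Real.log (∑ k, p k * a k j)))
          ≤ 1 - (1 / 2) * ∑ j, μ j * (Real.log (y j) + Real.log (∑ k, y k * a k j)))
      ↔ ((∀ i, 0 < p i) ∧ (∑ i, p i = 1) ∧
        ∀ y : Fin N → ℝ, (∀ i, 0 < y i) → (∑ i, y i = 1) → G y ≤ G p) := by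
    intro p
    constructor <;> rintro ⟨h1, h2, h3⟩ <;> refine ⟨h1, h2, fun y hy hys => ?_⟩ <;>
      have := h3 y hy hys <;> simp only [hG] at * <;> linarith
  refine ⟨ν, (key ν).2 ⟨hνpos, hνmem.2, hGmax⟩, ?_⟩
  -- uniqueness via strict concavity
  intro q hq
  obtain ⟨hq1, hq2, hq3⟩ := (key q).1 hq
  by_contra hne
  obtain ⟨i₀, hi₀⟩ := Function.ne_iff.1 hne
  -- both are maximizers of G
  have hGeq : G q = G ν := le_antisymm (hGmax q hq1 hq2) (hq3 ν hνpos hνmem.2)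
  set m : Fin N → ℝ := fun i => (q i + ν i) / 2 with hm
  have hmpos : ∀ i, 0 < m i := fun i => by
    have h1 := hq1 i; have h2 := hνpos i
    simp only [hm]; linarith
  have hmsum : ∑ i, m i = 1 := by
    simp only [hm, ← Finset.sum_div, Finset.sum_add_distrib, hq2, hνmem.2]
    norm_num
  -- linearity of the forms
  have hlin : ∀ j, ∑ k, m k * a k j = ((∑ k, q k * a k j) + (∑ k, ν k * a k j)) / 2 := by
    intro j
    rw [← Finset.sum_add_distrib, Finset.sum_div]
    exact Finset.sum_congr rfl fun k _ => by simp only [hm]; ring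
  -- strict concavity gives G m > (G q + G ν)/2 = G q
  have hstrict : (G q + G ν) / 2 < G m := by
    have h1 : ∀ j, μ j * ((Real.log (q j) + Real.log (∑ k, q k * a k j)
          + (Real.log (ν j) + Real.log (∑ k, ν k * a k j))) / 2)
        ≤ μ j * (Real.log (m j) + Real.log (∑ k, m k * a k j)) := by
      intro j
      apply mul_le_mul_of_nonneg_left _ (hμpos j).le
      have e1 := log_mid_le (hq1 j) (hνpos j)
      have e2 := log_mid_le (hsumpos q hq1 j) (hsumpos ν hνpos j)
      rw [hlin j]
      simp only [hm]
      linarith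
    have h2 : μ i₀ * ((Real.log (q i₀) + Real.log (∑ k, q k * a k i₀)
          + (Real.log (ν i₀) + Real.log (∑ k, ν k * a k i₀))) / 2)
        < μ i₀ * (Real.log (m i₀) + Real.log (∑ k, m k * a k i₀)) := by
      apply mul_lt_mul_of_pos_left _ (hμpos i₀)
      have e1 := log_mid_lt (hq1 i₀) (hνpos i₀) hi₀
      have e2 := log_mid_le (hsumpos q hq1 i₀) (hsumpos ν hνpos i₀)
      rw [hlin i₀]
      simp only [hm]
      linarith
    calc (G q + G ν) / 2
        = ∑ j, μ j * ((Real.log (q j) + Real.log (∑ k, q k * a k j)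
            + (Real.log (ν j) + Real.log (∑ k, ν k * a k j))) / 2) := by
          simp only [hG]
          rw [← Finset.sum_add_distrib, Finset.sum_div]
          exact Finset.sum_congr rfl fun j _ => by ring
      _ < ∑ j, μ j * (Real.log (m j) + Real.log (∑ k, m k * a k j)) :=
          Finset.sum_lt_sum (fun j _ => h1 j) ⟨i₀, Finset.mem_univ i₀, h2⟩
      _ = G m := rfl
  have hmle : G m ≤ G q := hq3 m hmpos hmsum
  linarith [hstrict, hGeq, hmle]
end

section
/- Define on the open positive orthant {y ∈ ℝ^N : y_i > 0 for all i} the function V̂(y) = ∑_{j=1}^N y_j − (1/2)∑_{j=1}^N μ_j (log y_j + log ∑_{k=1}^N y_k a_{k,j}), and define G_i(y) = (1/2)μ_i + (1/2)∑_{j=1}^N μ_j a_{i,j} y_i / (∑_{k=1}^N y_k a_{k,j}) − y_i. Then V̂ is differentiable on the open positive orthant and for each i and each y in the orthant, G_i(y) = −y_i · ∂V̂/∂y_i (y). -/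
/-- The gradient identity `G_i(y) = -y_i ∂V̂/∂y_i(y)` on the open positive orthant. -/
theorem stmt6 (N : ℕ) (hN : 1 ≤ N)
    (μ : Fin N → ℝ) (hμpos : ∀ i, 0 < μ i) (hμsum : ∑ i, μ i = 1)
    (a : Fin N → Fin N → ℝ) (ha : ∀ i j, 0 < a i j)
    (Vhat : (Fin N → ℝ) → ℝ)
    (hVhat : ∀ y : Fin N → ℝ, Vhat y =
      (∑ j, y j) - (1 / 2) * ∑ j, μ j * (Real.log (y j) + Real.log (∑ k, y k * a k j)))
    (G : Fin N → (Fin N → ℝ) → ℝ)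
    (hG : ∀ i (y : Fin N → ℝ), G i y =
      (1 / 2) * μ i + (1 / 2) * ∑ j, μ j * a i j * y i / (∑ k, y k * a k j) - y i) :
    ∀ y : Fin N → ℝ, (∀ i, 0 < y i) →
      DifferentiableAt ℝ Vhat y ∧
      ∀ i, G i y = -(y i) * fderiv ℝ Vhat y (Pi.single i 1) := by
  haveI : Nonempty (Fin N) := ⟨⟨0, hN⟩⟩
  intro y hy
  have hSpos : ∀ j, 0 < ∑ k, y k * a k j := fun j =>
    Finset.sum_pos (fun k _ => mul_pos (hy k) (ha k j)) Finset.univ_nonempty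
  let P : Fin N → (Fin N → ℝ) →L[ℝ] ℝ := fun j => ContinuousLinearMap.proj j
  let Lℓ : Fin N → (Fin N → ℝ) →L[ℝ] ℝ := fun j => ∑ k, a k j • P k
  let L : (Fin N → ℝ) →L[ℝ] ℝ :=
    (∑ j, P j) - (1 / 2 : ℝ) •
      ∑ j, μ j • ((y j)⁻¹ • P j + (∑ k, y k * a k j)⁻¹ • Lℓ j)
  have hv : Vhat = fun y => (∑ j, y j) -
      (1 / 2) * ∑ j, μ j * (Real.log (y j) + Real.log (∑ k, y k * a k j)) :=
    funext hVhat
  have hL : HasFDerivAt Vhat L y := by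
    rw [hv]
    apply HasFDerivAt.sub
    · exact HasFDerivAt.fun_sum fun j _ => (P j).hasFDerivAt
    · apply HasFDerivAt.const_mul
      apply HasFDerivAt.fun_sum
      intro j _
      apply HasFDerivAt.const_mul
      apply HasFDerivAt.add
      · exact (P j).hasFDerivAt.log (ne_of_gt (hy j))
      · have hS' : HasFDerivAt (fun y : Fin N → ℝ => ∑ k, y k * a k j) (Lℓ j) y :=
          HasFDerivAt.fun_sum fun k _ => (P k).hasFDerivAt.mul_const (a k j)
        exact hS'.log (ne_of_gt (hSpos j))
  refine ⟨hL.differentiableAt, fun i => ?_⟩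
  rw [hG, hL.fderiv]
  have hLe : L (Pi.single i 1) =
      1 - (1 / 2) * (μ i * (y i)⁻¹ + ∑ j, μ j * ((∑ k, y k * a k j)⁻¹ * a i j)) := by
    simp only [L, Lℓ, P, ContinuousLinearMap.sub_apply, ContinuousLinearMap.smul_apply,
      ContinuousLinearMap.sum_apply, ContinuousLinearMap.add_apply,
      ContinuousLinearMap.proj_apply, Pi.single_apply, smul_eq_mul, mul_ite, mul_one, mul_zero,
      Finset.sum_ite_eq, Finset.mem_univ, if_true]
    simp only [Finset.sum_ite_eq', Finset.mem_univ, if_true]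
    congr 1
    rw [show (∑ x, μ x * ((if x = i then (y x)⁻¹ else 0) + (∑ k, y k * a k x)⁻¹ * a i x)) = ∑ x, ((if x = i then μ x * (y x)⁻¹ else 0) + μ x * ((∑ k, y k * a k x)⁻¹ * a i x)) from Finset.sum_congr rfl fun j _ => by split <;> ring, Finset.sum_add_distrib, Finset.sum_ite_eq' Finset.univ i]
    simp
  rw [hLe]
  have hT : ∑ j, μ j * a i j * y i / (∑ k, y k * a k j)
      = y i * ∑ j, μ j * ((∑ k, y k * a k j)⁻¹ * a i j) := by
    rw [Finset.mul_sum]; exact Finset.sum_congr rfl fun j _ => by ring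
  rw [hT]
  have hyi : y i ≠ 0 := ne_of_gt (hy i)
  linear_combination (-(1/2) * μ i) * mul_inv_cancel₀ hyi
end

section
/- Let ν be a minimizer of V over the interior of the N-simplex Δ° = {y ∈ ℝ^N : y_i > 0 for all i, ∑_{i=1}^N y_i = 1}, and define φ_i = ∑_{j=1}^N μ_j a_{i,j} / (∑_{k=1}^N a_{k,j} ν_k) for 1 ≤ i ≤ N. Then for each i, ν_i = (1/2)(μ_i + ν_i φ_i); equivalently, φ_i = 2 − μ_i/ν_i. -/
lemma loglb (x h : ℝ) (hx : 0 < x) (hh : |h| ≤ x / 2) :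
    h / x - 2 * (h / x) ^ 2 ≤ Real.log (x + h) - Real.log x := by
  set s : ℝ := h / x with hs
  have habs : |s| ≤ 1 / 2 := by
    rw [hs, abs_div, abs_of_pos hx, div_le_div_iff₀ (by positivity) (by norm_num)]
    linarith
  have hs1 : (1:ℝ)/2 ≤ 1 + s := by
    have := abs_le.1 habs; linarith [this.1]
  have hpos : (0:ℝ) < 1 + s := by linarith
  have hlog : Real.log (x + h) - Real.log x = Real.log (1 + s) := by
    rw [← Real.log_div (by nlinarith [abs_le.1 hh] : x + h ≠ 0) (ne_of_gt hx)]
    congr 1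
    rw [hs]; field_simp
  rw [hlog]
  have h1 : Real.log (1 / (1 + s)) ≤ 1 / (1 + s) - 1 :=
    Real.log_le_sub_one_of_pos (by positivity)
  rw [Real.log_div one_ne_zero (ne_of_gt hpos), Real.log_one] at h1
  have h2 : 1 - 1 / (1 + s) ≤ Real.log (1 + s) := by linarith
  have h3 : s - 2 * s ^ 2 ≤ 1 - 1 / (1 + s) := by
    have key : (s - 2 * s ^ 2) * (1 + s) ≤ (1 - 1 / (1 + s)) * (1 + s) := by
      have : (1 - 1 / (1 + s)) * (1 + s) = s := by field_simp; ring
      rw [this]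
      nlinarith
    exact le_of_mul_le_mul_right key hpos
  linarith

/-- At the minimizer `ν` of `V`, the geometrical fitnesses satisfy
`ν i = (1/2)(μ i + ν i * φ i)`, i.e. `φ i = 2 - μ i / ν i` (Proposition 6 of the paper). -/
theorem stmt7 (N : ℕ) (hN : 1 ≤ N)
    (μ : Fin N → ℝ) (hμpos : ∀ i, 0 < μ i) (hμsum : ∑ i, μ i = 1)
    (a : Fin N → Fin N → ℝ) (ha : ∀ i j, 0 < a i j)
    (ν : Fin N → ℝ) (hνpos : ∀ i, 0 < ν i) (hνsum : ∑ i, ν i = 1)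
    (hmin : ∀ y : Fin N → ℝ, (∀ i, 0 < y i) → (∑ i, y i = 1) →
      (1 - (1 / 2) * ∑ j, μ j * (Real.log (ν j) + Real.log (∑ k, ν k * a k j)))
        ≤ 1 - (1 / 2) * ∑ j, μ j * (Real.log (y j) + Real.log (∑ k, y k * a k j)))
    (φ : Fin N → ℝ)
    (hφ : ∀ i, φ i = ∑ j, μ j * a i j / (∑ k, a k j * ν k)) :
    ∀ i, ν i = (1 / 2) * (μ i + ν i * φ i) ∧ φ i = 2 - μ i / ν i := by
  classical
  have hne : Nonempty (Fin N) := ⟨⟨0, hN⟩⟩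
  obtain ⟨S, hSdef⟩ : ∃ S : Fin N → ℝ, ∀ j, S j = ∑ k, a k j * ν k := ⟨_, fun _ => rfl⟩
  have hSpos : ∀ j, 0 < S j := by
    intro j
    rw [hSdef]
    exact Finset.sum_pos (fun k _ => mul_pos (ha k j) (hνpos k)) Finset.univ_nonempty
  have hSnu : ∀ j, (∑ k, ν k * a k j) = S j := by
    intro j
    rw [hSdef]
    exact Finset.sum_congr rfl (fun k _ => mul_comm _ _)
  have hφS : ∀ i, φ i = ∑ j, μ j * a i j / S j := by
    intro i
    rw [hφ i]
    exact Finset.sum_congr rfl fun j _ => by rw [hSdef]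
  obtain ⟨H, hHdef⟩ : ∃ H : Fin N → ℝ, ∀ i, H i = μ i / ν i + φ i := ⟨_, fun _ => rfl⟩
  -- key: all H i are equal
  have key : ∀ i l : Fin N, H i ≤ H l := by
    intro i l
    by_contra hc
    push_neg at hc
    have hil : i ≠ l := by rintro rfl; exact lt_irrefl _ hc
    obtain ⟨G, hG⟩ : ∃ G : ℝ, G = H i - H l := ⟨_, rfl⟩
    have hGpos : 0 < G := by rw [hG]; exact sub_pos.2 hc
    obtain ⟨D, hD⟩ : ∃ D : Fin N → ℝ, ∀ j, D j = a i j - a l j := ⟨_, fun _ => rfl⟩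
    obtain ⟨C, hC⟩ : ∃ C : ℝ,
        C = μ i / (ν i)^2 + μ l / (ν l)^2 + ∑ j, μ j * (D j)^2 / (S j)^2 := ⟨_, rfl⟩
    have hCnn : 0 ≤ C := by
      have h0 : 0 ≤ ∑ j, μ j * (D j)^2 / (S j)^2 :=
        Finset.sum_nonneg fun j _ =>
          div_nonneg (mul_nonneg (hμpos j).le (sq_nonneg _)) (sq_nonneg _)
      have h1 : 0 ≤ μ i / (ν i)^2 := div_nonneg (hμpos i).le (sq_nonneg _)
      have h2 : 0 ≤ μ l / (ν l)^2 := div_nonneg (hμpos l).le (sq_nonneg _)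
      rw [hC]; linarith
    obtain ⟨m, hm⟩ : ∃ m : ℝ,
        m = Finset.univ.inf' Finset.univ_nonempty (fun j => S j / (2 * (|D j| + 1))) := ⟨_, rfl⟩
    have hmpos : 0 < m := by
      rw [hm, Finset.lt_inf'_iff]
      intro j _
      exact div_pos (hSpos j) (by positivity)
    obtain ⟨t, ht⟩ : ∃ t : ℝ,
        t = min (min (ν i / 2) (ν l / 2)) (min m (G / (4 * C + 4))) := ⟨_, rfl⟩
    have htpos : 0 < t := by
      rw [ht]
      apply lt_min (lt_min (by linarith [hνpos i]) (by linarith [hνpos l]))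
      exact lt_min hmpos (div_pos hGpos (by linarith))
    have hti : t ≤ ν i / 2 := by
      rw [ht]; exact le_trans (min_le_left _ _) (min_le_left _ _)
    have htl : t ≤ ν l / 2 := by
      rw [ht]; exact le_trans (min_le_left _ _) (min_le_right _ _)
    have htm : ∀ j, t * |D j| ≤ S j / 2 := by
      intro j
      have h1 : t ≤ S j / (2 * (|D j| + 1)) := by
        rw [ht]
        exact le_trans (le_trans (min_le_right _ _) (min_le_left _ _))
          (by rw [hm]; exact Finset.inf'_le _ (Finset.mem_univ j))
      have h2 : t * (2 * (|D j| + 1)) ≤ S j := by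
        rw [le_div_iff₀ (by positivity)] at h1
        linarith
      nlinarith [abs_nonneg (D j), htpos]
    have htG : 2 * t * C < G := by
      have h1 : t ≤ G / (4 * C + 4) := by
        rw [ht]; exact le_trans (min_le_right _ _) (min_le_right _ _)
      have h2 : t * (4 * C + 4) ≤ G := by
        rw [le_div_iff₀ (by positivity)] at h1; linarith
      nlinarith
    obtain ⟨y, hy⟩ : ∃ y : Fin N → ℝ,
        ∀ k, y k = ν k + (if k = i then t else 0) - (if k = l then t else 0) := ⟨_, fun _ => rfl⟩
    have hyi : y i = ν i + t := by simp [hy, hil]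
    have hyl : y l = ν l - t := by simp [hy, Ne.symm hil]
    have hyo : ∀ k, k ≠ i → k ≠ l → y k = ν k := by
      intro k h1 h2; simp [hy, h1, h2]
    have hypos : ∀ k, 0 < y k := by
      intro k
      by_cases h1 : k = i
      · subst h1; rw [hyi]; linarith [hνpos k]
      by_cases h2 : k = l
      · subst h2; rw [hyl]; linarith [hνpos k, htl]
      · rw [hyo k h1 h2]; exact hνpos k
    have hysum : ∑ k, y k = 1 := by
      simp [hy, Finset.sum_add_distrib, Finset.sum_sub_distrib, Finset.sum_ite_eq', hνsum]
    have hS'y : ∀ j, (∑ k, y k * a k j) = S j + t * D j := by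
      intro j
      have e : ∀ k, y k * a k j = ν k * a k j + (if k = i then t * a k j else 0)
          - (if k = l then t * a k j else 0) := by
        intro k
        by_cases h1 : k = i <;> by_cases h2 : k = l <;>
          simp [hy, h1, h2, ite_mul, hil, Ne.symm hil] <;> ring
      rw [Finset.sum_congr rfl (fun k _ => e k)]
      rw [Finset.sum_sub_distrib, Finset.sum_add_distrib, Finset.sum_ite_eq', Finset.sum_ite_eq']
      simp only [Finset.mem_univ, if_pos]
      rw [hSnu j, hD]
      ring
    have hF := hmin y hypos hysum
    obtain ⟨Fν, hFν⟩ : ∃ Fν : ℝ,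
        Fν = ∑ j, μ j * (Real.log (ν j) + Real.log (∑ k, ν k * a k j)) := ⟨_, rfl⟩
    obtain ⟨Fy, hFy⟩ : ∃ Fy : ℝ,
        Fy = ∑ j, μ j * (Real.log (y j) + Real.log (∑ k, y k * a k j)) := ⟨_, rfl⟩
    rw [← hFν, ← hFy] at hF
    have hFle : Fy ≤ Fν := by linarith
    obtain ⟨A, hA⟩ : ∃ A : ℝ, A = t / ν i - 2 * (t / ν i)^2 := ⟨_, rfl⟩
    obtain ⟨B, hB⟩ : ∃ B : ℝ, B = (-t) / ν l - 2 * ((-t) / ν l)^2 := ⟨_, rfl⟩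
    obtain ⟨L, hL⟩ : ∃ L : Fin N → ℝ,
        ∀ j, L j = (if j = i then μ i * A else 0) + (if j = l then μ l * B else 0)
          + μ j * (t * D j / S j - 2 * (t * D j / S j)^2) := ⟨_, fun _ => rfl⟩
    have hb2 : ∀ j, t * D j / S j - 2 * (t * D j / S j)^2
        ≤ Real.log (∑ k, y k * a k j) - Real.log (∑ k, ν k * a k j) := by
      intro j
      rw [hS'y j, hSnu j]
      apply loglb _ _ (hSpos j)
      rw [abs_mul, abs_of_pos htpos]
      exact htm j
    have hpt : ∀ j, L j ≤ μ j * ((Real.log (y j) - Real.log (ν j))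
        + (Real.log (∑ k, y k * a k j) - Real.log (∑ k, ν k * a k j))) := by
      intro j
      have hb2j := hb2 j
      rw [hL j]
      by_cases h1 : j = i
      · subst h1
        have hb1 : A ≤ Real.log (y j) - Real.log (ν j) := by
          rw [hyi, hA]
          exact loglb (ν j) t (hνpos j) (by rw [abs_of_pos htpos]; exact hti)
        rw [if_pos rfl, if_neg hil, add_zero]
        have hmul := mul_le_mul_of_nonneg_left (add_le_add hb1 hb2j) (hμpos j).le
        linarith [hmul]
      by_cases h2 : j = l
      · subst h2
        have hb1 : B ≤ Real.log (y j) - Real.log (ν j) := by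
          have e : ν j - t = ν j + (-t) := by ring
          rw [hyl, hB, e]
          exact loglb (ν j) (-t) (hνpos j) (by rw [abs_neg, abs_of_pos htpos]; exact htl)
        rw [if_neg h1, if_pos rfl, zero_add]
        have hmul := mul_le_mul_of_nonneg_left (add_le_add hb1 hb2j) (hμpos j).le
        linarith [hmul]
      · have hb1 : (0:ℝ) ≤ Real.log (y j) - Real.log (ν j) := by rw [hyo j h1 h2]; simp
        rw [if_neg h1, if_neg h2, add_zero, zero_add]
        have hmul := mul_le_mul_of_nonneg_left (add_le_add hb1 hb2j) (hμpos j).le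
        linarith [hmul]
    have hsumL : ∑ j, L j = t * G - 2 * t^2 * C := by
      have e1 : ∑ j, L j = μ i * A + μ l * B
          + ∑ j, μ j * (t * D j / S j - 2 * (t * D j / S j)^2) := by
        rw [Finset.sum_congr rfl (fun j _ => hL j)]
        rw [Finset.sum_add_distrib, Finset.sum_add_distrib,
          Finset.sum_ite_eq', Finset.sum_ite_eq']
        simp
      have e2 : ∀ j, μ j * (t * D j / S j - 2 * (t * D j / S j)^2)
          = t * (μ j * D j / S j) - 2 * t^2 * (μ j * (D j)^2 / (S j)^2) := by
        intro j
        have hs := ne_of_gt (hSpos j)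
        field_simp
      have e3 : ∑ j, μ j * (t * D j / S j - 2 * (t * D j / S j)^2)
          = t * (∑ j, μ j * D j / S j) - 2 * t^2 * (∑ j, μ j * (D j)^2 / (S j)^2) := by
        rw [Finset.sum_congr rfl (fun j _ => e2 j), Finset.sum_sub_distrib,
          ← Finset.mul_sum, ← Finset.mul_sum]
      have e4 : ∑ j, μ j * D j / S j = φ i - φ l := by
        rw [hφS i, hφS l, ← Finset.sum_sub_distrib]
        exact Finset.sum_congr rfl fun j _ => by rw [hD]; ring
      rw [e1, e3, e4, hG, hHdef i, hHdef l, hC, hA, hB]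
      have h1 := ne_of_gt (hνpos i)
      have h2 := ne_of_gt (hνpos l)
      field_simp
      ring
    have hfinal : t * G - 2 * t^2 * C ≤ 0 := by
      have hle : ∑ j, L j ≤ ∑ j, μ j * ((Real.log (y j) - Real.log (ν j))
          + (Real.log (∑ k, y k * a k j) - Real.log (∑ k, ν k * a k j))) :=
        Finset.sum_le_sum fun j _ => hpt j
      have hexp : ∑ j, μ j * ((Real.log (y j) - Real.log (ν j))
          + (Real.log (∑ k, y k * a k j) - Real.log (∑ k, ν k * a k j)))
          = Fy - Fν := by
        rw [hFy, hFν, ← Finset.sum_sub_distrib]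
        exact Finset.sum_congr rfl fun j _ => by ring
      rw [hsumL, hexp] at hle
      linarith
    linarith [mul_pos htpos (sub_pos.mpr htG), hfinal]
  -- all H equal; compute ∑ ν k * φ k = 1
  have hνφ : ∑ k, ν k * φ k = 1 := by
    have e1 : ∀ k, ν k * φ k = ∑ j, (a k j * ν k) * (μ j / S j) := by
      intro k
      rw [hφS k, Finset.mul_sum]
      exact Finset.sum_congr rfl fun j _ => by ring
    rw [Finset.sum_congr rfl (fun k _ => e1 k), Finset.sum_comm]
    have e2 : ∀ j, ∑ k, (a k j * ν k) * (μ j / S j) = μ j := by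
      intro j
      rw [← Finset.sum_mul, ← hSdef j]
      field_simp [ne_of_gt (hSpos j)]
    rw [Finset.sum_congr rfl (fun j _ => e2 j), hμsum]
  have hsum2 : ∑ k, ν k * H k = 2 := by
    have e1 : ∀ k, ν k * H k = μ k + ν k * φ k := by
      intro k
      rw [hHdef k]
      have := ne_of_gt (hνpos k)
      field_simp
    rw [Finset.sum_congr rfl (fun k _ => e1 k), Finset.sum_add_distrib, hμsum, hνφ]
    norm_num
  intro i
  have hHi : H i = 2 := by
    have e1 : ∑ k, ν k * H k = ∑ k, ν k * H i :=
      Finset.sum_congr rfl fun k _ => by rw [le_antisymm (key k i) (key i k)]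
    rw [hsum2, ← Finset.sum_mul, hνsum, one_mul] at e1
    exact e1.symm
  have hφi : φ i = 2 - μ i / ν i := by
    have e := hHdef i
    rw [hHi] at e
    linarith
  constructor
  · rw [hφi]
    field_simp [ne_of_gt (hνpos i)]
    ring
  · exact hφi
end

section
/- Let 0 < p < 1 and a > 0 be real numbers. Then the equation p(1/y + (1−a)/(y + a(1−y))) = (1−p)(1/(1−y) + (1−a)/(1−y+ay)) has exactly one solution y_0 in the open interval (0,1). -/
open Set Filter Topology

private lemma g_anti (a : ℝ) {x y : ℝ} (ha : 0 < a) (hx : 0 < x) (hxy : x < y) (hy : y < 1) :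
    1 / y + (1 - a) / (y + a * (1 - y)) < 1 / x + (1 - a) / (x + a * (1 - x)) := by
  have hx1 : x < 1 := hxy.trans hy
  have hy0 : 0 < y := hx.trans hxy
  have hA : 0 < x + a * (1 - x) := by nlinarith
  have hB : 0 < y + a * (1 - y) := by nlinarith
  have key : (1 / x + (1 - a) / (x + a * (1 - x))) - (1 / y + (1 - a) / (y + a * (1 - y)))
      = (y - x) / (x * y) + (1 - a) ^ 2 * (y - x) / ((x + a * (1 - x)) * (y + a * (1 - y))) := by
    field_simp
    ring
  have h1 : 0 < (y - x) / (x * y) := div_pos (by linarith) (mul_pos hx hy0)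
  have h2 : 0 ≤ (1 - a) ^ 2 * (y - x) / ((x + a * (1 - x)) * (y + a * (1 - y))) :=
    div_nonneg (mul_nonneg (sq_nonneg _) (by linarith)) (mul_pos hA hB).le
  linarith

/-- The fixed-point equation (2) for the two-point metric space example has exactly one
solution in `(0,1)`. -/
theorem stmt13 (p a : ℝ) (hp0 : 0 < p) (hp1 : p < 1) (ha : 0 < a) :
    ∃! y₀ : ℝ, y₀ ∈ Set.Ioo (0 : ℝ) 1 ∧
      p * (1 / y₀ + (1 - a) / (y₀ + a * (1 - y₀)))
        = (1 - p) * (1 / (1 - y₀) + (1 - a) / (1 - y₀ + a * y₀)) := by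
  have hp1' : 0 < 1 - p := by linarith
  set f : ℝ → ℝ := fun y => p * (1 / y + (1 - a) / (y + a * (1 - y)))
      - (1 - p) * (1 / (1 - y) + (1 - a) / (1 - y + a * y)) with hf
  -- f is strictly decreasing on (0,1)
  have hanti : StrictAntiOn f (Set.Ioo (0 : ℝ) 1) := by
    intro x hx y hy hxy
    have h1 := g_anti a ha hx.1 hxy hy.2
    have h2 := g_anti a ha (show (0:ℝ) < 1 - y by linarith [hy.2])
      (show 1 - y < 1 - x by linarith) (show 1 - x < 1 by linarith [hx.1])
    have e1 : (1 - x) + a * (1 - (1 - x)) = 1 - x + a * x := by ring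
    have e2 : (1 - y) + a * (1 - (1 - y)) = 1 - y + a * y := by ring
    rw [e1, e2] at h2
    simp only [hf]
    nlinarith [mul_lt_mul_of_pos_left h1 hp0, mul_lt_mul_of_pos_left h2 hp1']
  -- continuity on (0,1)
  have hcont : ∀ y ∈ Set.Ioo (0 : ℝ) 1, ContinuousAt f y := by
    intro y hy
    have h0 : y ≠ 0 := ne_of_gt hy.1
    have h1 : y + a * (1 - y) ≠ 0 := by nlinarith [hy.1, hy.2]
    have h2 : (1 : ℝ) - y ≠ 0 := by have := hy.2; intro h; linarith [sub_eq_zero.mp h]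
    have h3 : 1 - y + a * y ≠ 0 := by nlinarith [hy.1, hy.2]
    have c1 : ContinuousAt (fun y : ℝ => y + a * (1 - y)) y := by fun_prop
    have c2 : ContinuousAt (fun y : ℝ => 1 - y) y := by fun_prop
    have c3 : ContinuousAt (fun y : ℝ => 1 - y + a * y) y := by fun_prop
    exact (continuousAt_const.mul
        ((continuousAt_const.div continuousAt_id h0).add (continuousAt_const.div c1 h1))).sub
      (continuousAt_const.mul
        ((continuousAt_const.div c2 h2).add (continuousAt_const.div c3 h3)))
  -- f tends to +∞ at 0⁺
  have t0 : Tendsto f (𝓝[>] (0 : ℝ)) atTop := by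
    have hrw : f = fun y => p * (1 / y) + (p * ((1 - a) / (y + a * (1 - y)))
        - (1 - p) * (1 / (1 - y) + (1 - a) / (1 - y + a * y))) := by
      funext y; simp only [hf]; ring
    have h1 : Tendsto (fun y : ℝ => 1 / y) (𝓝[>] (0 : ℝ)) atTop := by
      simpa [one_div] using tendsto_inv_nhdsGT_zero
    have h2 : ContinuousAt (fun y : ℝ => p * ((1 - a) / (y + a * (1 - y)))
        - (1 - p) * (1 / (1 - y) + (1 - a) / (1 - y + a * y))) 0 := by
      fun_prop (disch := (intros; norm_num <;> positivity))
    rw [hrw]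
    exact (h1.const_mul_atTop hp0).atTop_add
      (h2.tendsto.mono_left nhdsWithin_le_nhds)
  -- f tends to -∞ at 1⁻
  have t1 : Tendsto f (𝓝[<] (1 : ℝ)) atBot := by
    have hrw : f = fun y => -((1 - p) * (1 / (1 - y)))
        + (p * (1 / y + (1 - a) / (y + a * (1 - y)))
          - (1 - p) * ((1 - a) / (1 - y + a * y))) := by
      funext y; simp only [hf]; ring
    have hsub : Tendsto (fun y : ℝ => 1 - y) (𝓝[<] (1 : ℝ)) (𝓝[>] (0 : ℝ)) := by
      apply tendsto_nhdsWithin_of_tendsto_nhds_of_eventually_within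
      · have hc : Tendsto (fun y : ℝ => 1 - y) (𝓝 (1 : ℝ)) (𝓝 (1 - 1)) :=
          (continuous_const.sub continuous_id).tendsto 1
        simpa using hc.mono_left nhdsWithin_le_nhds
      · filter_upwards [self_mem_nhdsWithin] with y hy
        simp only [Set.mem_Iio] at hy
        simp only [Set.mem_Ioi]; linarith
    have hb : Tendsto (fun y : ℝ => 1 / (1 - y)) (𝓝[<] (1 : ℝ)) atTop := by
      have := tendsto_inv_nhdsGT_zero.comp hsub
      simpa [one_div, Function.comp_def] using this
    have hneg : Tendsto (fun y : ℝ => -((1 - p) * (1 / (1 - y)))) (𝓝[<] (1 : ℝ)) atBot :=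
      tendsto_neg_atTop_atBot.comp (hb.const_mul_atTop hp1')
    have h2 : ContinuousAt (fun y : ℝ => p * (1 / y + (1 - a) / (y + a * (1 - y)))
        - (1 - p) * ((1 - a) / (1 - y + a * y))) 1 := by
      fun_prop (disch := (intros; norm_num <;> positivity))
    rw [hrw]
    exact hneg.atBot_add (h2.tendsto.mono_left nhdsWithin_le_nhds)
  -- pick u near 0 with f u > 0
  have hIoo0 : Set.Ioo (0 : ℝ) 1 ∈ 𝓝[>] (0 : ℝ) :=
    Ioo_mem_nhdsGT_of_mem ⟨le_refl _, one_pos⟩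
  obtain ⟨u, hu2, hu1⟩ := ((t0.eventually_gt_atTop 0).and
    (eventually_of_mem hIoo0 fun y hy => hy)).exists
  -- pick v near 1 with f v < 0
  have hIoo1 : Set.Ioo (0 : ℝ) 1 ∈ 𝓝[<] (1 : ℝ) :=
    Ioo_mem_nhdsLT_of_mem ⟨zero_lt_one, le_refl _⟩
  obtain ⟨v, hv2, hv1⟩ := ((t1.eventually_lt_atBot 0).and
    (eventually_of_mem hIoo1 fun y hy => hy)).exists
  have huv : u < v := by
    by_contra h
    push_neg at h
    rcases h.lt_or_eq with h' | h'
    · have := hanti hv1 hu1 h'; linarith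
    · rw [h'] at hv2; linarith
  -- IVT
  have hcIcc : ContinuousOn f (Set.Icc u v) := fun y hy =>
    (hcont y ⟨lt_of_lt_of_le hu1.1 hy.1, lt_of_le_of_lt hy.2 hv1.2⟩).continuousWithinAt
  have h0mem : (0 : ℝ) ∈ Set.Icc (f v) (f u) := ⟨hv2.le, hu2.le⟩
  obtain ⟨y₀, hy₀m, hy₀⟩ := intermediate_value_Icc' huv.le hcIcc h0mem
  have hy₀Ioo : y₀ ∈ Set.Ioo (0 : ℝ) 1 :=
    ⟨hu1.1.trans_le hy₀m.1, lt_of_le_of_lt hy₀m.2 hv1.2⟩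
  refine ⟨y₀, ⟨hy₀Ioo, sub_eq_zero.mp hy₀⟩, ?_⟩
  rintro z ⟨hz, hzeq⟩
  have hz0 : f z = 0 := sub_eq_zero.mpr hzeq
  exact hanti.injOn hz hy₀Ioo (by rw [hz0, hy₀])
end

section
/- The function W(y) = ∑_{k=1}^N y_k − (1/2)∑_{j=1}^N μ_j (log y_j + log ∑_{k=1}^N y_k a_{k,j}) is strictly convex on the set 𝒴° = {y ∈ ℝ^N : y_i > 0 for all i, ∑_{i=1}^N y_i ≤ 1}, and W attains a minimum on 𝒴° at a unique point. -/
open Real Finset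

private lemma stmt16_log_le {p q t s : ℝ} (hp : 0 < p) (hq : 0 < q)
    (ht : 0 ≤ t) (hs : 0 ≤ s) (hts : t + s = 1) :
    t * Real.log p + s * Real.log q ≤ Real.log (t * p + s * q) := by
  simpa [smul_eq_mul] using
    strictConcaveOn_log_Ioi.concaveOn.2 (Set.mem_Ioi.2 hp) (Set.mem_Ioi.2 hq) ht hs hts

private lemma stmt16_log_lt {p q t s : ℝ} (hp : 0 < p) (hq : 0 < q) (hpq : p ≠ q)
    (ht : 0 < t) (hs : 0 < s) (hts : t + s = 1) :
    t * Real.log p + s * Real.log q < Real.log (t * p + s * q) := by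
  simpa [smul_eq_mul] using
    strictConcaveOn_log_Ioi.2 (Set.mem_Ioi.2 hp) (Set.mem_Ioi.2 hq) hpq ht hs hts

private lemma stmt16_convexS (N : ℕ) :
    Convex ℝ {y : Fin N → ℝ | (∀ i, 0 < y i) ∧ ∑ i, y i ≤ 1} := by
  intro x hx y hy t s ht hs hts
  constructor
  · intro i
    have hm : (0:ℝ) < min (x i) (y i) := lt_min (hx.1 i) (hy.1 i)
    have h1 := mul_le_mul_of_nonneg_left (min_le_left (x i) (y i)) ht
    have h2 := mul_le_mul_of_nonneg_left (min_le_right (x i) (y i)) hs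
    have : (t • x + s • y) i = t * x i + s * y i := by simp [smul_eq_mul]
    rw [this]; nlinarith
  · have : ∑ i, (t • x + s • y) i = t * ∑ i, x i + s * ∑ i, y i := by
      simp [Finset.mul_sum, Finset.sum_add_distrib, smul_eq_mul]
    rw [this]
    nlinarith [mul_le_mul_of_nonneg_left hx.2 ht, mul_le_mul_of_nonneg_left hy.2 hs]

private lemma stmt16_strictConvex (N : ℕ)
    (μ : Fin N → ℝ) (hμpos : ∀ i, 0 < μ i)
    (a : Fin N → Fin N → ℝ) (ha : ∀ i j, 0 < a i j) :
    StrictConvexOn ℝ {y : Fin N → ℝ | (∀ i, 0 < y i) ∧ ∑ i, y i ≤ 1}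
      (fun y : Fin N → ℝ =>
        (∑ k, y k) - (1 / 2) * ∑ j, μ j * (Real.log (y j) + Real.log (∑ k, y k * a k j))) := by
  refine ⟨stmt16_convexS N, ?_⟩
  intro x hx y hy hxy t s ht hs hts
  obtain ⟨j0, hj0⟩ : ∃ j, x j ≠ y j := Function.ne_iff.1 hxy
  have hz : ∀ i, (t • x + s • y) i = t * x i + s * y i := fun i => by simp [smul_eq_mul]
  -- linear forms
  have hLpos : ∀ (w : Fin N → ℝ), (∀ i, 0 < w i) → ∀ j, 0 < ∑ k, w k * a k j := by
    intro w hw j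
    exact Finset.sum_pos (fun k _ => mul_pos (hw k) (ha k j)) ⟨j0, Finset.mem_univ _⟩
  have hLx := hLpos x hx.1
  have hLy := hLpos y hy.1
  have hLz : ∀ j, ∑ k, (t • x + s • y) k * a k j
      = t * ∑ k, x k * a k j + s * ∑ k, y k * a k j := by
    intro j
    simp only [hz, Finset.mul_sum, ← Finset.sum_add_distrib]
    exact Finset.sum_congr rfl fun k _ => by ring
  -- key strict sum inequality
  have key : ∑ j, μ j * (t * (Real.log (x j) + Real.log (∑ k, x k * a k j))
        + s * (Real.log (y j) + Real.log (∑ k, y k * a k j)))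
      < ∑ j, μ j * (Real.log ((t • x + s • y) j) + Real.log (∑ k, (t • x + s • y) k * a k j)) := by
    apply Finset.sum_lt_sum
    · intro j _
      have h1 : t * Real.log (x j) + s * Real.log (y j) ≤ Real.log (t * x j + s * y j) :=
        stmt16_log_le (hx.1 j) (hy.1 j) ht.le hs.le hts
      have h2 := stmt16_log_le (hLx j) (hLy j) ht.le hs.le hts
      rw [hz j, hLz j]
      have := add_le_add h1 h2
      nlinarith [(hμpos j).le, this]
    · refine ⟨j0, Finset.mem_univ _, ?_⟩
      have h1 : t * Real.log (x j0) + s * Real.log (y j0) < Real.log (t * x j0 + s * y j0) :=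
        stmt16_log_lt (hx.1 j0) (hy.1 j0) hj0 ht hs hts
      have h2 := stmt16_log_le (hLx j0) (hLy j0) ht.le hs.le hts
      rw [hz j0, hLz j0]
      have := add_lt_add_of_lt_of_le h1 h2
      nlinarith [hμpos j0, this]
  have hsplit : ∀ (u v : Fin N → ℝ), ∑ j, μ j * (t * u j + s * v j)
      = t * ∑ j, μ j * u j + s * ∑ j, μ j * v j := by
    intro u v
    simp only [Finset.mul_sum, ← Finset.sum_add_distrib]
    exact Finset.sum_congr rfl fun j _ => by ring
  have hzsum : ∑ k, (t • x + s • y) k = t * ∑ k, x k + s * ∑ k, y k := by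
    simp only [hz, Finset.mul_sum, ← Finset.sum_add_distrib]
  rw [hsplit (fun j => Real.log (x j) + Real.log (∑ k, x k * a k j))
      (fun j => Real.log (y j) + Real.log (∑ k, y k * a k j))] at key
  simp only [smul_eq_mul]
  rw [hzsum]
  nlinarith [key]


private lemma stmt16_exists (N : ℕ) (hN : 1 ≤ N)
    (μ : Fin N → ℝ) (hμpos : ∀ i, 0 < μ i) (hμsum : ∑ i, μ i = 1)
    (a : Fin N → Fin N → ℝ) (ha : ∀ i j, 0 < a i j)
    (hW : StrictConvexOn ℝ {y : Fin N → ℝ | (∀ i, 0 < y i) ∧ ∑ i, y i ≤ 1}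
      (fun y : Fin N → ℝ =>
        (∑ k, y k) - (1 / 2) * ∑ j, μ j * (Real.log (y j) + Real.log (∑ k, y k * a k j)))) :
    ∃! ν : Fin N → ℝ, ((∀ i, 0 < ν i) ∧ ∑ i, ν i ≤ 1) ∧
      ∀ y : Fin N → ℝ, (∀ i, 0 < y i) → (∑ i, y i ≤ 1) →
        ((∑ k, ν k) - (1 / 2) * ∑ j, μ j * (Real.log (ν j) + Real.log (∑ k, ν k * a k j)))
          ≤ (∑ k, y k) - (1 / 2) * ∑ j, μ j * (Real.log (y j) + Real.log (∑ k, y k * a k j)) := by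
  have : Nonempty (Fin N) := ⟨⟨0, hN⟩⟩
  set W : (Fin N → ℝ) → ℝ := fun y =>
    (∑ k, y k) - (1 / 2) * ∑ j, μ j * (Real.log (y j) + Real.log (∑ k, y k * a k j)) with hWdef
  set S : Set (Fin N → ℝ) := {y | (∀ i, 0 < y i) ∧ ∑ i, y i ≤ 1} with hSdef
  have hNpos : (0:ℝ) < N := by exact_mod_cast hN
  -- the base point
  set y0 : Fin N → ℝ := fun _ => 1/(2*N) with hy0def
  have hy0pos : ∀ i, (0:ℝ) < y0 i := fun i => by positivity
  have hy0sum : ∑ i, y0 i = 1/2 := by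
    simp only [hy0def, Finset.sum_const, Finset.card_univ, Fintype.card_fin, nsmul_eq_mul]
    field_simp
  have hy0S : y0 ∈ S := ⟨hy0pos, by rw [hy0sum]; norm_num⟩
  set c : ℝ := W y0 with hcdef
  -- bound on the linear forms
  set B : ℝ := 1 + ∑ j, ∑ k, a k j with hBdef
  have hB1 : (1:ℝ) ≤ B := by
    have : (0:ℝ) ≤ ∑ j, ∑ k, a k j :=
      Finset.sum_nonneg fun j _ => Finset.sum_nonneg fun k _ => (ha k j).le
    simp [hBdef]; linarith
  have hBpos : (0:ℝ) < B := lt_of_lt_of_le one_pos hB1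
  have hy_le_one : ∀ y ∈ S, ∀ k, y k ≤ 1 := by
    intro y hy k
    have := Finset.single_le_sum (f := y) (fun j _ => (hy.1 j).le) (Finset.mem_univ k)
    linarith [hy.2]
  have hLB : ∀ y ∈ S, ∀ j, ∑ k, y k * a k j ≤ B := by
    intro y hy j
    have h1 : ∑ k, y k * a k j ≤ ∑ k, a k j := by
      apply Finset.sum_le_sum
      intro k _
      nlinarith [hy_le_one y hy k, (hy.1 k).le, ha k j]
    have h2 : ∑ k, a k j ≤ ∑ j', ∑ k, a k j' :=
      Finset.single_le_sum (f := fun j' => ∑ k, a k j')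
        (fun j' _ => Finset.sum_nonneg fun k _ => (ha k j').le) (Finset.mem_univ j)
    simp only [hBdef]; linarith
  have hLpos : ∀ y : Fin N → ℝ, (∀ i, 0 < y i) → ∀ j, 0 < ∑ k, y k * a k j := fun y hy j =>
    Finset.sum_pos (fun k _ => mul_pos (hy k) (ha k j)) Finset.univ_nonempty
  -- μmin
  have hne : (Finset.univ : Finset (Fin N)).Nonempty := Finset.univ_nonempty
  set μmin : ℝ := Finset.univ.inf' hne μ with hmdef
  have hμminle : ∀ i, μmin ≤ μ i := fun i => Finset.inf'_le μ (Finset.mem_univ i)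
  have hμminpos : 0 < μmin := by
    obtain ⟨i0, _, hi0⟩ := Finset.exists_mem_eq_inf' hne μ
    rw [hmdef, hi0]; exact hμpos i0
  -- choice of ε
  set ε : ℝ := min (1/(2*N)) (Real.exp (-(2*c + Real.log B + 1)/μmin)) with hεdef
  have hεpos : 0 < ε := lt_min (by positivity) (Real.exp_pos _)
  have hεle : ε ≤ 1/(2*N) := min_le_left _ _
  have hεlt1 : ε < 1 := by
    have hN1 : (1:ℝ) ≤ N := by exact_mod_cast hN
    have h2N : (2:ℝ) ≤ 2*N := by linarith
    have h12 : (1:ℝ)/(2*N) ≤ 1/2 := by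
      rw [div_le_div_iff₀ (by linarith) (by norm_num)]
      linarith
    linarith
  -- the coercivity bound
  have hbig : ∀ y ∈ S, (∃ i, y i < ε) → c < W y := by
    rintro y hyS ⟨i, hyi⟩
    have hlogy_nonpos : ∀ j, Real.log (y j) ≤ 0 := fun j =>
      Real.log_nonpos (hyS.1 j).le (hy_le_one y hyS j)
    have hsum1 : ∑ j, μ j * Real.log (y j) ≤ μ i * Real.log (y i) := by
      have h := Finset.sum_le_sum_of_subset_of_nonneg
        (Finset.subset_univ {i}) (f := fun j => -(μ j * Real.log (y j)))
        (fun j _ _ => by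
          have h := mul_nonneg (hμpos j).le (neg_nonneg.2 (hlogy_nonpos j))
          rw [mul_neg] at h
          exact h)
      simp only [Finset.sum_singleton, Finset.sum_neg_distrib] at h
      linarith
    have hlogyi_neg : Real.log (y i) < 0 := Real.log_neg (hyS.1 i) (hyi.trans hεlt1)
    have h2 : μ i * Real.log (y i) ≤ μmin * Real.log (y i) :=
      mul_le_mul_of_nonpos_right (hμminle i) hlogyi_neg.le
    have h3 : μmin * Real.log (y i) < -(2*c + Real.log B + 1) := by
      have hle : Real.log ε ≤ -(2*c + Real.log B + 1)/μmin := by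
        calc Real.log ε ≤ Real.log (Real.exp (-(2*c + Real.log B + 1)/μmin)) :=
              Real.log_le_log hεpos (min_le_right _ _)
          _ = -(2*c + Real.log B + 1)/μmin := Real.log_exp _
      have hlt : Real.log (y i) < -(2*c + Real.log B + 1)/μmin :=
        lt_of_lt_of_le (Real.log_lt_log (hyS.1 i) hyi) hle
      have := mul_lt_mul_of_pos_left hlt hμminpos
      rwa [mul_div_cancel₀ _ (ne_of_gt hμminpos)] at this
    have h4 : ∑ j, μ j * Real.log (∑ k, y k * a k j) ≤ Real.log B := by
      have : ∑ j, μ j * Real.log (∑ k, y k * a k j) ≤ ∑ j, μ j * Real.log B := by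
        apply Finset.sum_le_sum
        intro j _
        exact mul_le_mul_of_nonneg_left
          (Real.log_le_log (hLpos y hyS.1 j) (hLB y hyS j)) (hμpos j).le
      rwa [← Finset.sum_mul, hμsum, one_mul] at this
    have h5 : (0:ℝ) ≤ ∑ k, y k := Finset.sum_nonneg fun k _ => (hyS.1 k).le
    have hWexp : W y = (∑ k, y k) - (1/2) * (∑ j, μ j * Real.log (y j)
        + ∑ j, μ j * Real.log (∑ k, y k * a k j)) := by
      rw [hWdef]
      simp only [← Finset.sum_add_distrib]
      congr 1
      rw [mul_eq_mul_left_iff]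
      left
      exact Finset.sum_congr rfl fun j _ => by ring
    have hA1 : ∑ j, μ j * Real.log (y j) < -(2*c + Real.log B + 1) := by linarith
    rw [hWexp]
    clear_value ε μmin B c y0 W
    linarith [hA1, h4, h5]
  -- the compact set K
  set K : Set (Fin N → ℝ) := {y | (∀ i, ε ≤ y i) ∧ ∑ i, y i ≤ 1} with hKdef
  have hKS : K ⊆ S := fun y hy => ⟨fun i => lt_of_lt_of_le hεpos (hy.1 i), hy.2⟩
  have hKcl : IsClosed K := by
    have : K = (⋂ i, {y : Fin N → ℝ | ε ≤ y i}) ∩ {y : Fin N → ℝ | ∑ i, y i ≤ 1} := by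
      ext y; simp [hKdef, Set.mem_iInter]
    rw [this]
    exact (isClosed_iInter fun i => isClosed_le continuous_const (continuous_apply i)).inter
      (isClosed_le (continuous_finset_sum _ fun k _ => continuous_apply k) continuous_const)
  have hKsub : K ⊆ Set.Icc (0 : Fin N → ℝ) 1 := by
    intro y hy
    constructor
    · intro i; exact le_trans hεpos.le (hy.1 i)
    · intro i
      have h1 := Finset.single_le_sum (f := y)
        (fun j _ => le_trans hεpos.le (hy.1 j)) (Finset.mem_univ i)
      have : y i ≤ 1 := le_trans h1 hy.2
      simpa using this
  have hKcpt : IsCompact K := IsCompact.of_isClosed_subset isCompact_Icc hKcl hKsub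
  have hy0K : y0 ∈ K := ⟨fun i => hεle, by rw [hy0sum]; norm_num⟩
  have hWcont : ContinuousOn W K := by
    apply ContinuousOn.sub
    · exact (continuous_finset_sum _ fun k _ => continuous_apply k).continuousOn
    · apply ContinuousOn.mul continuousOn_const
      apply continuousOn_finset_sum
      intro j _
      apply ContinuousOn.mul continuousOn_const
      apply ContinuousOn.add
      · exact ContinuousOn.log (continuous_apply j).continuousOn
          (fun y hy => ne_of_gt (lt_of_lt_of_le hεpos (hy.1 j)))
      · exact ContinuousOn.log
          (continuous_finset_sum _ fun k _ => (continuous_apply k).mul continuous_const).continuousOn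
          (fun y hy => ne_of_gt (hLpos y (fun i => lt_of_lt_of_le hεpos (hy.1 i)) j))
  obtain ⟨ν, hνK, hνmin⟩ := hKcpt.exists_isMinOn ⟨y0, hy0K⟩ hWcont
  have hνS : ν ∈ S := hKS hνK
  have hglobal : ∀ y ∈ S, W ν ≤ W y := by
    intro y hyS
    by_cases hcase : ∀ i, ε ≤ y i
    · exact hνmin ⟨hcase, hyS.2⟩
    · push_neg at hcase
      obtain ⟨i, hi⟩ := hcase
      have h1 := hbig y hyS ⟨i, hi⟩
      have h2 : W ν ≤ c := hνmin hy0K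
      linarith
  refine ⟨ν, ⟨hνS, fun y h1 h2 => hglobal y ⟨h1, h2⟩⟩, ?_⟩
  rintro ν' ⟨hν'S, hν'min⟩
  exact hW.eq_of_isMinOn (isMinOn_iff.2 fun y hy => hν'min y hy.1 hy.2)
    (isMinOn_iff.2 hglobal) hν'S hνS

/-- The Lyapunov function `W` of the coupled process is strictly convex on the partial
simplex `𝒴° = {y : ∀ i, 0 < y i, ∑ i, y i ≤ 1}` and attains its minimum there at a
unique point (Proposition 7 of the paper). -/
theorem stmt16 (N : ℕ) (hN : 1 ≤ N)
    (μ : Fin N → ℝ) (hμpos : ∀ i, 0 < μ i) (hμsum : ∑ i, μ i = 1)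
    (a : Fin N → Fin N → ℝ) (ha : ∀ i j, 0 < a i j) :
    StrictConvexOn ℝ {y : Fin N → ℝ | (∀ i, 0 < y i) ∧ ∑ i, y i ≤ 1}
      (fun y : Fin N → ℝ =>
        (∑ k, y k) - (1 / 2) * ∑ j, μ j * (Real.log (y j) + Real.log (∑ k, y k * a k j))) ∧
    ∃! ν : Fin N → ℝ, ((∀ i, 0 < ν i) ∧ ∑ i, ν i ≤ 1) ∧
      ∀ y : Fin N → ℝ, (∀ i, 0 < y i) → (∑ i, y i ≤ 1) →
        ((∑ k, ν k) - (1 / 2) * ∑ j, μ j * (Real.log (ν j) + Real.log (∑ k, ν k * a k j)))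
          ≤ (∑ k, y k) - (1 / 2) * ∑ j, μ j * (Real.log (y j) + Real.log (∑ k, y k * a k j)) := by
  have h1 := stmt16_strictConvex N μ hμpos a ha
  exact ⟨h1, stmt16_exists N hN μ hμpos hμsum a ha h1⟩
end
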